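/- arXiv:1301.6354 — 5 statements merged into one kernel-verified Lean document; each statement's English description precedes it below -/
import Mathlib

section
/- Let N ≥ 1, let b : ℝ^N → ℝ^N be continuously differentiable with bounded derivative, and let (φ_v)_{v∈ℝ} be its flow. Let m : ℝ^N → (0,∞) be a continuous, everywhere positive probability density with respect to Lebesgue measure λ^N, and set μ := m · λ^N. Then for every v ∈ ℝ the image measure μ ∘ φ_v^{-1} is absolutely continuous with respect to μ, with Radon–Nikodym density d(μ∘φ_v^{-1})/dμ(x) = (m(φ_{−v}(x))/m(x)) · exp( − ∫₀^v (div b)(φ_{−σ}(x)) dσ ) for λ^N-almost every x ∈ ℝ^N. -/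
/-
The Jacobian `L t` of `φ t` at `x` solves the variational equation `L' = Db(φ t x) L`,
`L 0 = 1`: a solution exists by the Peano–Baker series, and Grönwall's inequality, applied to
`φ t (x + k) - φ t x - L t k` with `b` uniformly differentiable near the compact trajectory,
shows it is the derivative. Jacobi's formula then gives Liouville's formula
`det Dφ_t(x) = exp ∫₀ᵗ div b(φ_s x) ds`. As `φ (-v)` inverts `φ v`, the change of variables
formula gives `μ ∘ (φ v)⁻¹` the Lebesgue density `m (φ (-v) x) · det Dφ_{-v}(x)`, and dividing
by `m > 0` gives its density with respect to `μ`.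
-/

open MeasureTheory Filter Topology Set Metric
open scoped NNReal ENNReal

namespace Matrix

variable {n 𝕜 : Type*} [Fintype n] [DecidableEq n] [NontriviallyNormedField 𝕜]

theorem det_updateCol_eq_sum_prod_erase (M M' : Matrix n n 𝕜) (i : n) :
    (M.updateCol i fun r => M' r i).det
      = ∑ σ : Equiv.Perm n,
          (Equiv.Perm.sign σ : 𝕜) * ((∏ j ∈ Finset.univ.erase i, M (σ j) j) * M' (σ i) i) := by
  rw [det_apply']
  refine Finset.sum_congr rfl fun σ _ => ?_
  rw [← Finset.mul_prod_erase Finset.univ _ (Finset.mem_univ i), updateCol_self, mul_comm (M' _ _)]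
  congr 2
  exact Finset.prod_congr rfl fun j hj => updateCol_ne (Finset.ne_of_mem_erase hj)

theorem sum_det_updateCol_eq_trace_adjugate_mul (M M' : Matrix n n 𝕜) :
    ∑ i, (M.updateCol i fun r => M' r i).det = (M.adjugate * M').trace := by
  refine Finset.sum_congr rfl fun i _ => ?_
  rw [← cramer_apply, cramer_eq_adjugate_mulVec]
  simp [mulVec, mul_apply, dotProduct]

theorem hasDerivAt_det {f : 𝕜 → Matrix n n 𝕜} {f' : Matrix n n 𝕜} {t : 𝕜}
    (h : ∀ i j, HasDerivAt (fun s => f s i j) (f' i j) t) :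
    HasDerivAt (fun s => (f s).det) ((f t).adjugate * f').trace t := by
  simp only [det_apply']
  refine (HasDerivAt.fun_sum fun σ (_ : σ ∈ Finset.univ) =>
    (HasDerivAt.fun_finsetProd fun i (_ : i ∈ Finset.univ) => h (σ i) i).const_mul
      (Equiv.Perm.sign σ : 𝕜)).congr_deriv ?_
  simp only [← sum_det_updateCol_eq_trace_adjugate_mul, det_updateCol_eq_sum_prod_erase,
    smul_eq_mul, Finset.mul_sum]
  exact Finset.sum_comm.symm

end Matrix

section Liouville

variable {E : Type*} [NormedAddCommGroup E] [NormedSpace ℝ E] [FiniteDimensional ℝ E]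

theorem HasDerivAt.det_of_eq_mul {L : ℝ → E →L[ℝ] E} {A : E →L[ℝ] E} {t : ℝ}
    (hL : HasDerivAt L (A * L t) t) :
    HasDerivAt (fun s => (L s).det) (LinearMap.trace ℝ E A * (L t).det) t := by
  classical
  let B := Module.finBasis ℝ E
  let toMatrix : (E →L[ℝ] E) → Matrix _ _ ℝ := fun X => LinearMap.toMatrix B B X
  have hentry : ∀ i j, HasDerivAt (fun s => toMatrix (L s) i j) (toMatrix (A * L t) i j) t :=
    fun i j => by
      simpa [toMatrix, LinearMap.toMatrix_apply, Function.comp_def] using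
        (B.coord i).toContinuousLinearMap.hasFDerivAt.comp_hasDerivAt t
          (hL.clm_apply (hasDerivAt_const t (B j)))
  have hdet := Matrix.hasDerivAt_det hentry
  simp only [toMatrix, LinearMap.det_toMatrix, ContinuousLinearMap.toLinearMap_mul,
    LinearMap.toMatrix_mul, Matrix.trace_mul_comm (Matrix.adjugate _), Matrix.mul_assoc,
    Matrix.mul_adjugate] at hdet
  simpa [LinearMap.trace_eq_matrix_trace ℝ B, mul_comm] using hdet

theorem det_eq_exp_integral_trace {A L : ℝ → E →L[ℝ] E} (hA : Continuous A) (hL0 : L 0 = 1)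
    (hL : ∀ t, HasDerivAt L (A t * L t) t) (t : ℝ) :
    (L t).det = Real.exp (∫ s in (0:ℝ)..t, LinearMap.trace ℝ E (A s)) := by
  set τ : ℝ → ℝ := fun s => LinearMap.trace ℝ E (A s)
  have hτ : Continuous τ :=
    ((LinearMap.trace ℝ E).comp (ContinuousLinearMap.coeLM ℝ)).continuous_of_finiteDimensional.comp
      hA
  have hI : ∀ u, HasDerivAt (fun w => ∫ s in (0:ℝ)..w, τ s) (τ u) u := fun u =>
    intervalIntegral.integral_hasDerivAt_right (hτ.intervalIntegrable _ _)
      (hτ.stronglyMeasurableAtFilter _ _) hτ.continuousAt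
  have hconst : ∀ u, HasDerivAt (fun w => (L w).det * Real.exp (-∫ s in (0:ℝ)..w, τ s)) 0 u :=
    fun u => ((hL u).det_of_eq_mul.mul (hI u).neg.exp).congr_deriv (by ring)
  have h := is_const_of_deriv_eq_zero (fun u => (hconst u).differentiableAt)
    (fun u => (hconst u).deriv) t 0
  simp only [hL0, show (1 : E →L[ℝ] E).det = 1 from LinearMap.det_id, intervalIntegral.integral_same, neg_zero,
    Real.exp_zero, mul_one, Real.exp_neg] at h
  field_simp at h
  exact h

end Liouville

section PeanoBaker

variable {R : Type*} [NormedRing R] [NormedAlgebra ℝ R] (A : ℝ → R)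

noncomputable def peanoBakerTerm : ℕ → ℝ → R
  | 0 => fun _ => 1
  | n + 1 => fun t => ∫ s in (0:ℝ)..t, A s * peanoBakerTerm n s

variable {A}

theorem continuous_peanoBakerTerm (hA : Continuous A) : ∀ n, Continuous (peanoBakerTerm A n)
  | 0 => continuous_const
  | n + 1 => intervalIntegral.continuous_primitive
      (fun _ _ => (hA.mul (continuous_peanoBakerTerm hA n)).intervalIntegrable _ _) 0

theorem hasDerivAt_peanoBakerTerm_succ [CompleteSpace R] (hA : Continuous A) (n : ℕ) (t : ℝ) :
    HasDerivAt (peanoBakerTerm A (n + 1)) (A t * peanoBakerTerm A n t) t :=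
  have h := hA.mul (continuous_peanoBakerTerm hA n)
  intervalIntegral.integral_hasDerivAt_right (h.intervalIntegrable _ _)
    (h.stronglyMeasurableAtFilter _ _) h.continuousAt

theorem norm_peanoBakerTerm_le {C : ℝ} (hC : ∀ t, ‖A t‖ ≤ C) (n : ℕ) (t : ℝ) :
    ‖peanoBakerTerm A n t‖ ≤ ‖(1 : R)‖ * ((C * |t|) ^ n / n.factorial) := by
  induction n generalizing t with
  | zero => simp [peanoBakerTerm]
  | succ n ih =>
    have hC0 : 0 ≤ C := (norm_nonneg _).trans (hC 0)
    have hpt : ∀ s,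
        ‖A s * peanoBakerTerm A n s‖ ≤ C * ‖(1 : R)‖ * C ^ n / n.factorial * |s - 0| ^ n :=
      fun s => by
        calc ‖A s * peanoBakerTerm A n s‖ ≤ C * (‖(1 : R)‖ * ((C * |s|) ^ n / n.factorial)) :=
              (norm_mul_le _ _).trans (mul_le_mul (hC s) (ih s) (norm_nonneg _) hC0)
          _ = _ := by rw [sub_zero, mul_pow]; ring
    calc ‖peanoBakerTerm A (n + 1) t‖
        = ‖∫ s in uIoc 0 t, A s * peanoBakerTerm A n s‖ :=
          intervalIntegral.norm_integral_eq_norm_integral_uIoc _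
      _ ≤ ∫ s in uIoc 0 t, C * ‖(1 : R)‖ * C ^ n / n.factorial * |s - 0| ^ n :=
          norm_integral_le_of_norm_le (Continuous.integrableOn_uIoc (by fun_prop) (μ := volume))
            (ae_of_all _ hpt)
      _ = ‖(1 : R)‖ * ((C * |t|) ^ (n + 1) / (n + 1).factorial) := by
          rw [integral_const_mul, integral_pow_abs_sub_uIoc, sub_zero, Nat.factorial_succ]
          push_cast
          field_simp
          ring

theorem summable_peanoBakerTerm [CompleteSpace R] {C : ℝ} (hC : ∀ t, ‖A t‖ ≤ C) (t : ℝ) :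
    Summable fun n => peanoBakerTerm A n t :=
  .of_norm_bounded ((Real.summable_pow_div_factorial _).mul_left _) fun n =>
    norm_peanoBakerTerm_le hC n t

theorem exists_hasDerivAt_eq_mul [CompleteSpace R] (hA : Continuous A) {C : ℝ}
    (hC : ∀ t, ‖A t‖ ≤ C) :
    ∃ L : ℝ → R, L 0 = 1 ∧ ∀ t, HasDerivAt L (A t * L t) t := by
  have hC0 : 0 ≤ C := (norm_nonneg _).trans (hC 0)
  refine ⟨fun t => 1 + ∑' n, peanoBakerTerm A (n + 1) t, by simp [peanoBakerTerm], fun t => ?_⟩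
  set T := |t| + 1
  have hderiv_le : ∀ n, ∀ y ∈ Ioo (-T) T,
      ‖A y * peanoBakerTerm A n y‖ ≤ C * (‖(1 : R)‖ * ((C * T) ^ n / n.factorial)) := by
    intro n y hy
    refine (norm_mul_le _ _).trans (mul_le_mul (hC y) ((norm_peanoBakerTerm_le hC n y).trans ?_)
      (norm_nonneg _) hC0)
    have : |y| ≤ T := abs_le.2 ⟨hy.1.le, hy.2.le⟩
    gcongr
  have ht : t ∈ Ioo (-T) T := ⟨by linarith [neg_abs_le t], by linarith [le_abs_self t]⟩
  have hsum := hasDerivAt_tsum_of_isPreconnected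
    (((Real.summable_pow_div_factorial _).mul_left _).mul_left C) isOpen_Ioo isPreconnected_Ioo
    (fun n y _ => hasDerivAt_peanoBakerTerm_succ hA n y) hderiv_le
    (y₀ := t) ht ((summable_nat_add_iff 1).2 (summable_peanoBakerTerm hC t)) (y := t) ht
  refine (hsum.const_add 1).congr_deriv ?_
  rw [(summable_peanoBakerTerm hC t).tsum_mul_left, (summable_peanoBakerTerm hC t).tsum_eq_zero_add]
  rfl

end PeanoBaker

theorem gronwallBound_zero_eq_mul (K ε x : ℝ) :
    gronwallBound 0 K ε x = ε * gronwallBound 0 K 1 x := by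
  rcases eq_or_ne K 0 with rfl | hK
  · simp only [gronwallBound_K0]; ring
  · simp only [gronwallBound_of_K_ne_0 hK]; ring

theorem IsCompact.exists_forall_norm_sub_sub_fderiv_le {E F : Type*} [NormedAddCommGroup E]
    [NormedSpace ℝ E] [ProperSpace E] [NormedAddCommGroup F] [NormedSpace ℝ F] {f : E → F}
    (hf : ContDiff ℝ 1 f) {S : Set E} (hS : IsCompact S) {ε : ℝ} (hε : 0 < ε) :
    ∃ δ > 0, ∀ z ∈ S, ∀ y, ‖y - z‖ < δ → ‖f y - f z - fderiv ℝ f z (y - z)‖ ≤ ε * ‖y - z‖ := by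
  obtain ⟨δ, hδ, hUC⟩ := Metric.uniformContinuousOn_iff.1
    ((hS.cthickening (r := 1)).uniformContinuousOn_of_continuous
      (hf.continuous_fderiv one_ne_zero).continuousOn) ε hε
  refine ⟨min δ 1, by positivity, fun z hz y hy => ?_⟩
  have hball : ∀ w ∈ closedBall z ‖y - z‖, w ∈ cthickening 1 S ∧ dist w z < δ := fun w hw =>
    have hwz : dist w z < min δ 1 := (mem_closedBall.1 hw).trans_lt hy
    ⟨mem_cthickening_of_dist_le w z 1 S hz (hwz.le.trans (min_le_right _ _)),
      hwz.trans_le (min_le_left _ _)⟩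
  have hz' := hball z (mem_closedBall_self (norm_nonneg _))
  exact (convex_closedBall z _).norm_image_sub_le_of_norm_hasFDerivWithin_le'
    (fun w _ => (hf.differentiable one_ne_zero w).hasFDerivAt.hasFDerivWithinAt)
    (fun w hw => by simpa [dist_eq_norm] using (hUC w (hball w hw).1 z hz'.1 (hball w hw).2).le)
    (mem_closedBall_self (norm_nonneg _)) (by simp [mem_closedBall, dist_eq_norm])

section Flow

variable {E : Type*} [NormedAddCommGroup E] [NormedSpace ℝ E]

structure IsFlow (b : E → E) (φ : ℝ → E → E) : Prop where
  zero_apply : ∀ x, φ 0 x = x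
  isIntegralCurve : ∀ x, IsIntegralCurve (fun t => φ t x) (fun _ => b)

namespace IsFlow

variable {b : E → E} {φ : ℝ → E → E} {K : ℝ≥0}

theorem neg (h : IsFlow b φ) : IsFlow (-b) fun t => φ (-t) where
  zero_apply x := by simp [h.zero_apply]
  isIntegralCurve x t := by
    simpa [Function.comp_def] using (h.isIntegralCurve x (-t)).scomp t (hasDerivAt_neg t)

theorem add_apply (h : IsFlow b φ) (hb : LipschitzWith K b) (s t : ℝ) (x : E) :
    φ s (φ t x) = φ (s + t) x :=
  congrFun (ODE_solution_unique_univ (v := fun _ => b) (s := fun _ => univ) (t₀ := 0)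
    (fun _ => hb.lipschitzOnWith) (fun s => ⟨h.isIntegralCurve (φ t x) s, trivial⟩)
    (fun s => ⟨(h.isIntegralCurve x).comp_add t s, trivial⟩) (by simp [h.zero_apply])) s

theorem dist_le (h : IsFlow b φ) (hb : LipschitzWith K b) {t : ℝ} (ht : 0 ≤ t) (x y : E) :
    dist (φ t x) (φ t y) ≤ dist x y * Real.exp (K * t) := by
  simpa using dist_le_of_trajectories_ODE (v := fun _ => b) (fun _ => hb)
    (h.isIntegralCurve x).continuous.continuousOn
    (fun s _ => (h.isIntegralCurve x s).hasDerivWithinAt)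
    (h.isIntegralCurve y).continuous.continuousOn
    (fun s _ => (h.isIntegralCurve y s).hasDerivWithinAt)
    (by simp [h.zero_apply]) t ⟨ht, le_rfl⟩

theorem norm_sub_sub_le_gronwallBound (h : IsFlow b φ) (hK : ∀ y, ‖fderiv ℝ b y‖₊ ≤ K) {x : E}
    {L : ℝ → E →L[ℝ] E} (hL0 : L 0 = 1)
    (hL : ∀ t, HasDerivAt L (fderiv ℝ b (φ t x) * L t) t) (y : E) {v η : ℝ} (hv : 0 ≤ v)
    (hη : ∀ t ∈ Icc 0 v,
      ‖b (φ t y) - b (φ t x) - fderiv ℝ b (φ t x) (φ t y - φ t x)‖ ≤ η) :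
    ‖φ v y - φ v x - L v (y - x)‖ ≤ gronwallBound 0 K η v := by
  set R := fun t => φ t y - φ t x - L t (y - x)
  have hR : ∀ t, HasDerivAt R (b (φ t y) - b (φ t x) - fderiv ℝ b (φ t x) (L t (y - x))) t :=
    fun t => ((h.isIntegralCurve y t).sub (h.isIntegralCurve x t)).sub
      (by simpa using (hL t).clm_apply (hasDerivAt_const t (y - x)))
  have hR' : ∀ t ∈ Ico 0 v,
      ‖b (φ t y) - b (φ t x) - fderiv ℝ b (φ t x) (L t (y - x))‖ ≤ K * ‖R t‖ + η := by
    intro t ht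
    have hsplit : b (φ t y) - b (φ t x) - fderiv ℝ b (φ t x) (L t (y - x))
        = fderiv ℝ b (φ t x) (R t)
          + (b (φ t y) - b (φ t x) - fderiv ℝ b (φ t x) (φ t y - φ t x)) := by
      simp only [R, map_sub]; abel
    rw [hsplit]
    exact norm_add_le_of_le ((fderiv ℝ b _).le_of_opNorm_le (hK _) _) (hη t ⟨ht.1, ht.2.le⟩)
  simpa [R] using norm_le_gronwallBound_of_norm_deriv_right_le
    (fun t _ => (hR t).continuousAt.continuousWithinAt) (fun t _ => (hR t).hasDerivWithinAt)
    (by simp [R, h.zero_apply, hL0]) hR' v ⟨hv, le_rfl⟩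

theorem hasFDerivAt_of_nonneg [ProperSpace E] (h : IsFlow b φ) (hb : ContDiff ℝ 1 b)
    (hK : ∀ y, ‖fderiv ℝ b y‖₊ ≤ K) {x : E} {L : ℝ → E →L[ℝ] E} (hL0 : L 0 = 1)
    (hL : ∀ t, HasDerivAt L (fderiv ℝ b (φ t x) * L t) t) {v : ℝ} (hv : 0 ≤ v) :
    HasFDerivAt (φ v) (L v) x := by
  have hlip : LipschitzWith K b :=
    lipschitzWith_of_nnnorm_fderiv_le (hb.differentiable one_ne_zero) hK
  set M := Real.exp (K * v)
  set G := gronwallBound 0 K 1 v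
  have hG : 0 ≤ G :=
    (gronwallBound_x0 0 K 1).symm.le.trans (gronwallBound_mono le_rfl zero_le_one K.2 hv)
  rw [hasFDerivAt_iff_isLittleO_nhds_zero, Asymptotics.isLittleO_iff]
  intro c hc
  set ε := c / (M * G + 1)
  obtain ⟨δ, hδ, hlin⟩ := ((isCompact_Icc (a := 0) (b := v)).image
    (h.isIntegralCurve x).continuous).exists_forall_norm_sub_sub_fderiv_le hb
    (ε := ε) (by positivity)
  filter_upwards [ball_mem_nhds (0 : E) (div_pos hδ (Real.exp_pos (K * v)))] with k hk
  have hclose : ∀ t ∈ Icc 0 v, ‖φ t (x + k) - φ t x‖ ≤ ‖k‖ * M := fun t ht => by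
    simpa [dist_eq_norm] using (h.dist_le hlip ht.1 (x + k) x).trans
      (mul_le_mul_of_nonneg_left (Real.exp_le_exp.2 (by gcongr; exact ht.2)) dist_nonneg)
  have hkM : ‖k‖ * M < δ := by
    rw [mem_ball_zero_iff, lt_div_iff₀ (Real.exp_pos _)] at hk; exact hk
  calc ‖φ v (x + k) - φ v x - L v k‖
      ≤ gronwallBound 0 K (ε * (‖k‖ * M)) v := by
        simpa using h.norm_sub_sub_le_gronwallBound hK hL0 hL (x + k) hv fun t ht =>
          (hlin _ ⟨t, ht, rfl⟩ _ ((hclose t ht).trans_lt hkM)).trans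
            (mul_le_mul_of_nonneg_left (hclose t ht) (by positivity))
    _ = c * (M * G / (M * G + 1)) * ‖k‖ := by
        rw [gronwallBound_zero_eq_mul]; ring
    _ ≤ c * ‖k‖ := by
        gcongr
        exact mul_le_of_le_one_right hc.le ((div_le_one (by positivity)).2 (by linarith))

theorem hasFDerivAt [ProperSpace E] (h : IsFlow b φ) (hb : ContDiff ℝ 1 b)
    (hK : ∀ y, ‖fderiv ℝ b y‖₊ ≤ K) {x : E} {L : ℝ → E →L[ℝ] E} (hL0 : L 0 = 1)
    (hL : ∀ t, HasDerivAt L (fderiv ℝ b (φ t x) * L t) t) (v : ℝ) :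
    HasFDerivAt (φ v) (L v) x := by
  rcases le_total 0 v with hv | hv
  · exact h.hasFDerivAt_of_nonneg hb hK hL0 hL hv
  have hfderiv_neg : ∀ y, fderiv ℝ (-b) y = -fderiv ℝ b y := fun y => fderiv_neg
  simpa using h.neg.hasFDerivAt_of_nonneg hb.neg (by simpa [hfderiv_neg] using hK)
    (L := fun t => L (-t)) (by simpa using hL0)
    (fun t => by simpa [hfderiv_neg, Function.comp_def] using (hL (-t)).scomp t (hasDerivAt_neg t))
    (neg_nonneg.2 hv)

variable [FiniteDimensional ℝ E]

theorem exists_hasFDerivAt_det_eq (h : IsFlow b φ) (hb : ContDiff ℝ 1 b)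
    (hK : ∀ y, ‖fderiv ℝ b y‖₊ ≤ K) (v : ℝ) (x : E) :
    ∃ L : E →L[ℝ] E, HasFDerivAt (φ v) L x ∧
      L.det = Real.exp (∫ s in (0:ℝ)..v, LinearMap.trace ℝ E (fderiv ℝ b (φ s x))) := by
  have hA : Continuous fun t => fderiv ℝ b (φ t x) :=
    (hb.continuous_fderiv one_ne_zero).comp (h.isIntegralCurve x).continuous
  obtain ⟨L, hL0, hL⟩ := exists_hasDerivAt_eq_mul hA fun t => NNReal.coe_le_coe.2 (hK _)
  exact ⟨L v, h.hasFDerivAt hb hK hL0 hL v, det_eq_exp_integral_trace hA hL0 hL v⟩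

theorem differentiable (h : IsFlow b φ) (hb : ContDiff ℝ 1 b)
    (hK : ∀ y, ‖fderiv ℝ b y‖₊ ≤ K) (v : ℝ) : Differentiable ℝ (φ v) := fun x =>
  (h.exists_hasFDerivAt_det_eq hb hK v x).choose_spec.1.differentiableAt

theorem det_fderiv_neg (h : IsFlow b φ) (hb : ContDiff ℝ 1 b)
    (hK : ∀ y, ‖fderiv ℝ b y‖₊ ≤ K) (v : ℝ) (x : E) :
    (fderiv ℝ (φ (-v)) x).det
      = Real.exp (-∫ σ in (0:ℝ)..v, LinearMap.trace ℝ E (fderiv ℝ b (φ (-σ) x))) := by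
  obtain ⟨L, hL, hdet⟩ := h.exists_hasFDerivAt_det_eq hb hK (-v) x
  rw [hL.fderiv, hdet, intervalIntegral.integral_comp_neg
    (fun s => LinearMap.trace ℝ E (fderiv ℝ b (φ s x))), neg_zero,
    intervalIntegral.integral_symm 0 (-v), neg_neg]

end IsFlow

end Flow

section ChangeOfVariables

variable {E : Type*} [NormedAddCommGroup E] [NormedSpace ℝ E] [FiniteDimensional ℝ E]
  [MeasurableSpace E] [BorelSpace E] (μ : Measure E) [μ.IsAddHaarMeasure] {T S : E → E}

theorem map_withDensity_eq_withDensity_abs_det {S' : E → E →L[ℝ] E} (hT : Measurable T)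
    (hST : Function.LeftInverse S T) (hTS : Function.RightInverse S T)
    (hS : ∀ x, HasFDerivAt S (S' x) x) (f : E → ℝ≥0∞) :
    (μ.withDensity f).map T = μ.withDensity fun x => ENNReal.ofReal |(S' x).det| * f (S x) := by
  ext A hA
  rw [Measure.map_apply hT hA, withDensity_apply _ (hT hA), withDensity_apply _ hA,
    ← image_eq_preimage_of_inverse hTS hST,
    lintegral_image_eq_lintegral_abs_det_fderiv_mul μ hA (fun x _ => (hS x).hasFDerivWithinAt)
      hTS.injective.injOn]

theorem rnDeriv_map_withDensity_ofReal (hT : Measurable T) (hST : Function.LeftInverse S T)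
    (hTS : Function.RightInverse S T) (hS : Differentiable ℝ S) {m : E → ℝ} (hm : Measurable m)
    (hm0 : ∀ x, 0 < m x) :
    (μ.withDensity fun x => ENNReal.ofReal (m x)).map T ≪
        μ.withDensity (fun x => ENNReal.ofReal (m x)) ∧
      ((μ.withDensity fun x => ENNReal.ofReal (m x)).map T).rnDeriv
          (μ.withDensity fun x => ENNReal.ofReal (m x))
        =ᵐ[μ] fun x => ENNReal.ofReal (m (S x) / m x * |(fderiv ℝ S x).det|) := by
  have hd : Measurable fun x => m (S x) / m x * |(fderiv ℝ S x).det| :=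
    ((hm.comp hS.continuous.measurable).div hm).mul <| continuous_abs.measurable.comp <|
      ContinuousLinearMap.continuous_det.measurable.comp (measurable_fderiv ℝ S)
  have hmap : (μ.withDensity fun x => ENNReal.ofReal (m x)).map T
      = (μ.withDensity fun x => ENNReal.ofReal (m x)).withDensity
          fun x => ENNReal.ofReal (m (S x) / m x * |(fderiv ℝ S x).det|) := by
    rw [map_withDensity_eq_withDensity_abs_det μ hT hST hTS fun x => (hS x).hasFDerivAt,
      ← withDensity_mul _ hm.ennreal_ofReal hd.ennreal_ofReal]
    congr 1 with x
    rw [Pi.mul_apply, ← ENNReal.ofReal_mul (hm0 x).le, ← ENNReal.ofReal_mul (abs_nonneg _)]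
    field_simp [(hm0 x).ne']
  refine ⟨hmap ▸ withDensity_absolutelyContinuous _ _, ?_⟩
  rw [hmap]
  exact (Measure.rnDeriv_withDensity _ hd.ennreal_ofReal).filter_mono
    (withDensity_absolutelyContinuous' hm.ennreal_ofReal.aemeasurable
      (ae_of_all _ fun x => by simp [hm0 x])).ae_le

end ChangeOfVariables

theorem stmt_0_general (N : ℕ)
    (b : EuclideanSpace ℝ (Fin N) → EuclideanSpace ℝ (Fin N))
    (hb : ContDiff ℝ 1 b) (hb' : ∃ C : ℝ, ∀ x, ‖fderiv ℝ b x‖ ≤ C)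
    (φ : ℝ → EuclideanSpace ℝ (Fin N) → EuclideanSpace ℝ (Fin N))
    (hφ0 : ∀ x, φ 0 x = x)
    (hφ' : ∀ (v : ℝ) (x : EuclideanSpace ℝ (Fin N)),
      HasDerivAt (fun t => φ t x) (b (φ v x)) v)
    (m : EuclideanSpace ℝ (Fin N) → ℝ)
    (hmc : Continuous m) (hmpos : ∀ x, 0 < m x)
    (μ : Measure (EuclideanSpace ℝ (Fin N)))
    (hμ : μ = volume.withDensity fun x => ENNReal.ofReal (m x)) :
    ∀ v : ℝ,
      μ.map (φ v) ≪ μ ∧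
      (μ.map (φ v)).rnDeriv μ =ᵐ[(volume : Measure (EuclideanSpace ℝ (Fin N)))]
        fun x => ENNReal.ofReal ((m (φ (-v) x) / m x) *
          Real.exp (-∫ σ in (0:ℝ)..v,
            LinearMap.trace ℝ (EuclideanSpace ℝ (Fin N))
              (fderiv ℝ b (φ (-σ) x) :
                EuclideanSpace ℝ (Fin N) →ₗ[ℝ] EuclideanSpace ℝ (Fin N)))) := by
  intro v
  obtain ⟨C, hC⟩ := hb'
  have hflow : IsFlow b φ := ⟨hφ0, fun x t => hφ' t x⟩
  have hK : ∀ y, ‖fderiv ℝ b y‖₊ ≤ C.toNNReal := fun y =>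
    NNReal.coe_le_coe.1 ((hC y).trans (Real.le_coe_toNNReal C))
  have hlip := lipschitzWith_of_nnnorm_fderiv_le (hb.differentiable one_ne_zero) hK
  have hdiff := hflow.differentiable hb hK
  subst hμ
  obtain ⟨hac, hrn⟩ := rnDeriv_map_withDensity_ofReal volume (hdiff v).continuous.measurable
    (fun x => by rw [hflow.add_apply hlip, neg_add_cancel, hφ0])
    (fun x => by rw [hflow.add_apply hlip, add_neg_cancel, hφ0]) (hdiff (-v)) hmc.measurable hmpos
  refine ⟨hac, hrn.trans (ae_of_all _ fun x => ?_)⟩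
  simp only [hflow.det_fderiv_neg hb hK, abs_of_pos (Real.exp_pos _)]

/-- Density formula for the pushforward of an absolutely continuous probability
measure under the flow of a `C¹` vector field with bounded derivative. -/
theorem stmt_0 (N : ℕ) (hN : 1 ≤ N)
    (b : EuclideanSpace ℝ (Fin N) → EuclideanSpace ℝ (Fin N))
    (hb : ContDiff ℝ 1 b) (hb' : ∃ C : ℝ, ∀ x, ‖fderiv ℝ b x‖ ≤ C)
    (φ : ℝ → EuclideanSpace ℝ (Fin N) → EuclideanSpace ℝ (Fin N))
    (hφ0 : ∀ x, φ 0 x = x)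
    (hφ' : ∀ (v : ℝ) (x : EuclideanSpace ℝ (Fin N)),
      HasDerivAt (fun t => φ t x) (b (φ v x)) v)
    (m : EuclideanSpace ℝ (Fin N) → ℝ)
    (hmc : Continuous m) (hmpos : ∀ x, 0 < m x) (hm1 : ∫ x, m x = 1)
    (μ : Measure (EuclideanSpace ℝ (Fin N)))
    (hμ : μ = volume.withDensity fun x => ENNReal.ofReal (m x)) :
    ∀ v : ℝ,
      μ.map (φ v) ≪ μ ∧
      (μ.map (φ v)).rnDeriv μ =ᵐ[(volume : Measure (EuclideanSpace ℝ (Fin N)))]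
        fun x => ENNReal.ofReal ((m (φ (-v) x) / m x) *
          Real.exp (-∫ σ in (0:ℝ)..v,
            LinearMap.trace ℝ (EuclideanSpace ℝ (Fin N))
              (fderiv ℝ b (φ (-σ) x) :
                EuclideanSpace ℝ (Fin N) →ₗ[ℝ] EuclideanSpace ℝ (Fin N)))) :=
  stmt_0_general N b hb hb' φ hφ0 hφ' m hmc hmpos μ hμ
end

section
/- Let (M,d) be a metric space with its Borel σ-algebra and a Borel probability measure μ. Let f_n (n ∈ ℕ) and f be Borel measurable maps M → M with f_n → f μ-almost everywhere. Assume that for each n the image measure μ ∘ f_n^{-1} is absolutely continuous with respect to μ with density ρ_n := d(μ∘f_n^{-1})/dμ, that the family (ρ_n)_{n∈ℕ} is uniformly integrable, and that ρ_n converges μ-almost everywhere to a measurable function ρ. Then μ ∘ f^{-1} is absolutely continuous with respect to μ with d(μ∘f^{-1})/dμ = ρ μ-almost everywhere, and ρ_n → ρ in L¹(μ). -/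
/-!
Vitali's convergence theorem gives `ρₙ → ρ` in `L¹`, the limit being integrable by Fatou's
lemma. Hence for every bounded continuous `h`, `∫ h d(μ ∘ fₙ⁻¹) = ∫ ρₙ⁺ h dμ` tends to
`∫ ρ⁺ h dμ`, while `fₙ → f` a.e. makes `μ ∘ fₙ⁻¹` converge weakly to `μ ∘ f⁻¹`. Since bounded
continuous functions separate finite Borel measures on a metric space, `μ ∘ f⁻¹ = ρ⁺ μ`.
-/

open MeasureTheory Filter Topology

namespace MeasureTheory

variable {α : Type*} [MeasurableSpace α] {μ : Measure α}

lemma eLpNorm_one_eq_ofReal_integral_norm {E : Type*} [NormedAddCommGroup E] {f : α → E}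
    (hf : Integrable f μ) : eLpNorm f 1 μ = ENNReal.ofReal (∫ x, ‖f x‖ ∂μ) := by
  rw [← lpNorm_one_eq_integral_norm hf.1, ofReal_lpNorm (memLp_one_iff_integrable.2 hf)]

lemma unifIntegrable_one_of_forall_setIntegral_abs_lt {ι : Type*} {f : ι → α → ℝ}
    (hf : ∀ i, Integrable (f i) μ)
    (hui : ∀ ε > (0 : ℝ), ∃ δ > (0 : ℝ), ∀ i, ∀ A : Set α, MeasurableSet A →
      μ A < ENNReal.ofReal δ → ∫ x in A, |f i x| ∂μ < ε) :
    UnifIntegrable f 1 μ := by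
  intro ε hε
  obtain ⟨δ, hδ, hsmall⟩ := hui ε hε
  refine ⟨δ / 2, by positivity, fun i A hA hμA => ?_⟩
  have hμA' : μ A < ENNReal.ofReal δ :=
    hμA.trans_lt (ENNReal.ofReal_lt_ofReal_iff hδ |>.2 (by linarith))
  rw [eLpNorm_indicator_eq_eLpNorm_restrict hA,
    eLpNorm_one_eq_ofReal_integral_norm (hf i).restrict]
  exact ENNReal.ofReal_le_ofReal (hsmall i A hA hμA').le

lemma integrable_of_tendsto_ae_of_integral_norm_le {E : Type*} [NormedAddCommGroup E]
    {f : ℕ → α → E} {g : α → E} {C : ℝ} (hf : ∀ n, Integrable (f n) μ)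
    (hC : ∀ n, ∫ x, ‖f n x‖ ∂μ ≤ C)
    (hfg : ∀ᵐ x ∂μ, Tendsto (fun n => f n x) atTop (𝓝 (g x))) :
    Integrable g μ := by
  refine memLp_one_iff_integrable.1
    ⟨aestronglyMeasurable_of_tendsto_ae _ (fun n => (hf n).1) hfg, ?_⟩
  refine (Lp.eLpNorm_le_of_ae_tendsto (.of_forall fun n => ?_) (fun n => (hf n).1) hfg).trans_lt
    (ENNReal.ofReal_lt_top (r := C))
  rw [eLpNorm_one_eq_ofReal_integral_norm (hf n)]
  exact ENNReal.ofReal_le_ofReal (hC n)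

lemma tendsto_integral_norm_sub_of_tendsto_eLpNorm_sub {ι E : Type*} [NormedAddCommGroup E]
    {l : Filter ι} {F : ι → α → E} {f : α → E} (hF : ∀ i, AEStronglyMeasurable (F i) μ)
    (hf : AEStronglyMeasurable f μ) (hFf : Tendsto (fun i => eLpNorm (F i - f) 1 μ) l (𝓝 0)) :
    Tendsto (fun i => ∫ x, ‖F i x - f x‖ ∂μ) l (𝓝 0) := by
  have hnorm : ∀ i, ∫ x, ‖F i x - f x‖ ∂μ = (eLpNorm (F i - f) 1 μ).toReal := fun i => by
    rw [toReal_eLpNorm ((hF i).sub hf), lpNorm_one_eq_integral_norm ((hF i).sub hf)]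
    rfl
  simp only [hnorm]
  exact (ENNReal.tendsto_toReal ENNReal.zero_ne_top).comp hFf

lemma integral_withDensity_ofReal {E : Type*} [NormedAddCommGroup E] [NormedSpace ℝ E]
    {ρ : α → ℝ} (hρ : Measurable ρ) (h : α → E) :
    ∫ x, h x ∂μ.withDensity (fun x => ENNReal.ofReal (ρ x)) = ∫ x, max (ρ x) 0 • h x ∂μ := by
  rw [integral_withDensity_eq_integral_toReal_smul (f := fun x => ENNReal.ofReal (ρ x))
    (ENNReal.measurable_ofReal.comp hρ) (.of_forall fun _ => ENNReal.ofReal_lt_top)]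
  simp only [ENNReal.toReal_ofReal']

lemma tendsto_integral_withDensity_ofReal {ι E : Type*} [NormedAddCommGroup E]
    [NormedSpace ℝ E] {l : Filter ι} {ρ : ι → α → ℝ} {ρlim : α → ℝ}
    (hρ : ∀ i, Measurable (ρ i)) (hρlim : Measurable ρlim) (hρint : ∀ i, Integrable (ρ i) μ)
    (hL1 : Tendsto (fun i => eLpNorm (ρ i - ρlim) 1 μ) l (𝓝 0))
    {h : α → E} (hh : AEStronglyMeasurable h μ) {C : ℝ} (hC : ∀ x, ‖h x‖ ≤ C) :
    Tendsto (fun i => ∫ x, h x ∂μ.withDensity fun x => ENNReal.ofReal (ρ i x)) l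
      (𝓝 (∫ x, h x ∂μ.withDensity fun x => ENNReal.ofReal (ρlim x))) := by
  simp only [integral_withDensity_ofReal (hρ _), integral_withDensity_ofReal hρlim]
  have hdiff : ∀ i, eLpNorm ((fun x => max (ρ i x) 0 • h x) - fun x => max (ρlim x) 0 • h x) 1 μ
      ≤ ENNReal.ofReal C * eLpNorm (ρ i - ρlim) 1 μ := fun i => by
    refine eLpNorm_le_mul_eLpNorm_of_ae_le_mul (.of_forall fun x => ?_) 1
    calc ‖max (ρ i x) 0 • h x - max (ρlim x) 0 • h x‖
        = |max (ρ i x) 0 - max (ρlim x) 0| * ‖h x‖ := by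
          rw [← sub_smul, norm_smul, Real.norm_eq_abs]
      _ ≤ |ρ i x - ρlim x| * C :=
        mul_le_mul (abs_max_sub_max_le_abs _ _ _) (hC x) (norm_nonneg _) (abs_nonneg _)
      _ = C * ‖(ρ i - ρlim) x‖ := by rw [mul_comm, Pi.sub_apply, Real.norm_eq_abs]
  refine tendsto_integral_of_L1' _ ((hρlim.max measurable_const).aestronglyMeasurable.smul hh)
    (.of_forall fun i => (hρint i).pos_part.smul_bdd C hh (.of_forall hC)) ?_
  refine tendsto_of_tendsto_of_tendsto_of_le_of_le tendsto_const_nhds ?_ (fun _ => bot_le) hdiff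
  simpa using ENNReal.Tendsto.const_mul hL1 (.inr ENNReal.ofReal_ne_top)

end MeasureTheory

/-- Limits of maps whose image measures are absolutely continuous with uniformly
integrable, a.e. convergent densities: the limit map's image measure is absolutely
continuous with the limit density, and the densities converge in `L¹`. -/
theorem stmt_1 {M : Type*} [MetricSpace M] [MeasurableSpace M] [BorelSpace M]
    (μ : Measure M) [IsProbabilityMeasure μ]
    (f : ℕ → M → M) (g : M → M)
    (hf : ∀ n, Measurable (f n)) (hg : Measurable g)
    (hconv : ∀ᵐ x ∂μ, Tendsto (fun n => f n x) atTop (𝓝 (g x)))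
    (ρ : ℕ → M → ℝ) (ρlim : M → ℝ)
    (hρmeas : ∀ n, Measurable (ρ n))
    (hρint : ∀ n, Integrable (ρ n) μ)
    (hdens : ∀ n, μ.map (f n) = μ.withDensity fun x => ENNReal.ofReal (ρ n x))
    (hbdd : ∃ C : ℝ, ∀ n, ∫ x, |ρ n x| ∂μ ≤ C)
    (hui : ∀ ε > (0:ℝ), ∃ δ > (0:ℝ), ∀ n, ∀ A : Set M, MeasurableSet A →
      μ A < ENNReal.ofReal δ → ∫ x in A, |ρ n x| ∂μ < ε)
    (hρlimmeas : Measurable ρlim)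
    (hρconv : ∀ᵐ x ∂μ, Tendsto (fun n => ρ n x) atTop (𝓝 (ρlim x))) :
    μ.map g = (μ.withDensity fun x => ENNReal.ofReal (ρlim x)) ∧
    Tendsto (fun n => ∫ x, |ρ n x - ρlim x| ∂μ) atTop (𝓝 0) := by
  obtain ⟨C, hC⟩ := hbdd
  have hρlimint : Integrable ρlim μ :=
    integrable_of_tendsto_ae_of_integral_norm_le hρint hC hρconv
  have hL1 : Tendsto (fun n => eLpNorm (ρ n - ρlim) 1 μ) atTop (𝓝 0) :=
    tendsto_Lp_finite_of_tendsto_ae le_rfl ENNReal.one_ne_top (fun n => (hρint n).1)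
      (memLp_one_iff_integrable.2 hρlimint)
      (unifIntegrable_one_of_forall_setIntegral_abs_lt hρint hui) hρconv
  refine ⟨?_, tendsto_integral_norm_sub_of_tendsto_eLpNorm_sub (fun n => (hρint n).1)
    hρlimint.1 hL1⟩
  have := isFiniteMeasure_withDensity_ofReal hρlimint.2
  refine ext_of_forall_integral_eq_of_IsFiniteMeasure fun h => tendsto_nhds_unique ?_
    (tendsto_integral_withDensity_ofReal hρmeas hρlimmeas hρint hL1
      h.continuous.aestronglyMeasurable h.norm_coe_le_norm)
  have hdistr := tendstoInDistribution_of_ae_tendsto (fun n => (hf n).aemeasurable)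
    hg.aemeasurable hconv
  simpa only [ProbabilityMeasure.coe_mk, hdens] using
    ProbabilityMeasure.tendsto_iff_forall_integral_tendsto.1 hdistr.tendsto h
end

section
/- Let G : Ω → ℝ^d be bounded, continuous, and Lipschitz along constant shifts, i.e. there is L ≥ 0 with ‖G(V + x𝟙) − G(V + y𝟙)‖ ≤ L‖x − y‖ for all V ∈ Ω and x, y ∈ ℝ^d. Then: (i) for every W ∈ Ω there exists a unique continuous φ_W : ℝ → ℝ^d with φ_W(s) = ∫₀^s G(θ_v W + φ_W(v)𝟙) dv for all s ∈ ℝ; (ii) defining W^s := θ_s W + φ_W(s)𝟙, one has W^0 = W and (W^s)^v = W^{s+v} for all s, v ∈ ℝ; equivalently, φ_W(s+v) = φ_W(s) + φ_{W^s}(v) for all s, v ∈ ℝ. -/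
/-!
Freezing the path, `φ_W` solves the non-autonomous ODE `φ' = F_W(v, φ)` with
`F_W(v, x) = G(θ_v W + x𝟙)`, a bounded vector field, continuous in `(v, x)` and globally
Lipschitz in `x`. Picard–Lindelöf on `[-n, n]` and Gronwall uniqueness give a global solution,
unique among continuous solutions of the integral equation. For the flow property,
`v ↦ φ_W(s + v) - φ_W(s)` solves the equation driven by `F_W(s + ·, φ_W(s) + ·)`, which is
exactly `F_{W^s}` since `θ_v (θ_s W + c𝟙) = θ_{s+v} W + c𝟙`; uniqueness identifies it with
`φ_{W^s}`.
-/

open MeasureTheory Filter Topology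

/-- The time shift `θ_s` on the path space `C(ℝ, ℝ^d)`: `(θ_s W)(u) = W(u + s)`. -/
noncomputable def pathShift {d : ℕ} (s : ℝ) (W : C(ℝ, EuclideanSpace ℝ (Fin d))) :
    C(ℝ, EuclideanSpace ℝ (Fin d)) :=
  W.comp ⟨fun u => u + s, by continuity⟩

open Set Function
open scoped NNReal

section IntegralCurve

variable {E : Type*} [NormedAddCommGroup E] [NormedSpace ℝ E] {F : ℝ → E → E} {γ γ' : ℝ → E}

theorem continuous_and_eq_integral_iff_isIntegralCurve [CompleteSpace E]
    (hF : Continuous (uncurry F)) {t₀ : ℝ} {x₀ : E} :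
    (Continuous γ ∧ ∀ t, γ t = x₀ + ∫ s in t₀..t, F s (γ s)) ↔
      γ t₀ = x₀ ∧ IsIntegralCurve γ F := by
  have hcomp : ∀ {γ : ℝ → E}, Continuous γ → Continuous fun s => F s (γ s) :=
    fun hγ => hF.comp (continuous_id.prodMk hγ)
  constructor
  · rintro ⟨hγc, hγ⟩
    refine ⟨by simpa using hγ t₀, fun t => ?_⟩
    have h := ((hcomp hγc).integral_hasStrictDerivAt t₀ t).hasDerivAt.const_add x₀
    rwa [← funext hγ] at h
  · rintro ⟨hγ₀, hγ⟩
    refine ⟨hγ.continuous, fun t => ?_⟩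
    rw [intervalIntegral.integral_eq_sub_of_hasDerivAt (fun s _ => hγ s)
      ((hcomp hγ.continuous).intervalIntegrable _ _), hγ₀, add_sub_cancel]

theorem IsIntegralCurve.eq_of_lipschitzWith {K : ℝ≥0} (hF : ∀ t, LipschitzWith K (F t))
    (hγ : IsIntegralCurve γ F) (hγ' : IsIntegralCurve γ' F) {t₀ : ℝ} (h : γ t₀ = γ' t₀) :
    γ = γ' :=
  ODE_solution_unique_univ (s := fun _ => univ) (fun t => (hF t).lipschitzOnWith)
    (fun t => ⟨hγ t, trivial⟩) (fun t => ⟨hγ' t, trivial⟩) h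

theorem IsIntegralCurve.comp_const_add_sub (hγ : IsIntegralCurve γ F) (s : ℝ) :
    IsIntegralCurve (fun v => γ (s + v) - γ s) (fun v x => F (s + v) (γ s + x)) := fun v => by
  simpa using ((hγ (s + v)).comp_const_add s v).sub_const (γ s)

variable [CompleteSpace E] {M : ℝ} {K : ℝ≥0}

theorem exists_forall_mem_ball_hasDerivAt (hFc : ∀ x, Continuous (F · x))
    (hFb : ∀ t x, ‖F t x‖ ≤ M) (hFl : ∀ t, LipschitzWith K (F t)) (t₀ : ℝ) (x₀ : E) (T : ℝ≥0) :
    ∃ γ : ℝ → E, γ t₀ = x₀ ∧ ∀ t ∈ Metric.ball t₀ T, HasDerivAt γ (F t (γ t)) t := by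
  have hM : 0 ≤ M := (norm_nonneg _).trans (hFb t₀ x₀)
  -- on `[t₀ - T, t₀ + T]` the solution stays in the ball of radius `M T`
  have hPL : IsPicardLindelof F (tmin := t₀ - T) (tmax := t₀ + T) ⟨t₀, by simp⟩ x₀
      (⟨M, hM⟩ * T) 0 ⟨M, hM⟩ K :=
    { lipschitzOnWith := fun t _ => (hFl t).lipschitzOnWith
      continuousOn := fun x _ => (hFc x).continuousOn
      norm_le := fun t _ x _ => hFb t x
      mul_max_le := by simp; exact le_rfl }
  obtain ⟨γ, hγ₀, hγ⟩ := hPL.exists_eq_forall_mem_Icc_hasDerivWithinAt₀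
  refine ⟨γ, hγ₀, fun t ht => ?_⟩
  rw [Real.ball_eq_Ioo] at ht
  exact (hγ t (Ioo_subset_Icc_self ht)).hasDerivAt (Icc_mem_nhds ht.1 ht.2)

theorem exists_isIntegralCurve (hFc : ∀ x, Continuous (F · x)) (hFb : ∀ t x, ‖F t x‖ ≤ M)
    (hFl : ∀ t, LipschitzWith K (F t)) (t₀ : ℝ) (x₀ : E) :
    ∃ γ : ℝ → E, γ t₀ = x₀ ∧ IsIntegralCurve γ F := by
  choose γ hγ₀ hγ using fun n : ℕ => exists_forall_mem_ball_hasDerivAt hFc hFb hFl t₀ x₀ n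
  have hagree : ∀ m n : ℕ, ∀ t ∈ Metric.ball t₀ m, t ∈ Metric.ball t₀ n → γ m t = γ n t := by
    intro m n t hm hn
    set r : ℝ := min m n
    have ht : t ∈ Metric.ball t₀ r := Metric.mem_ball.2 (lt_min hm hn)
    have hr₀ : t₀ ∈ Metric.ball t₀ r := Metric.mem_ball_self (dist_nonneg.trans_lt ht)
    have hr : Metric.ball t₀ r ⊆ Metric.ball t₀ m ∩ Metric.ball t₀ n :=
      subset_inter (Metric.ball_subset_ball (min_le_left _ _))
        (Metric.ball_subset_ball (min_le_right _ _))
    rw [Real.ball_eq_Ioo] at ht hr₀ hr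
    exact ODE_solution_unique_of_mem_Ioo (s := fun _ => univ) (fun t _ => (hFl t).lipschitzOnWith)
      hr₀ (fun t ht => ⟨hγ m t (hr ht).1, trivial⟩) (fun t ht => ⟨hγ n t (hr ht).2, trivial⟩)
      (by rw [hγ₀, hγ₀]) ht
  set N : ℝ → ℕ := fun t => ⌊dist t t₀⌋₊ + 1
  have hN : ∀ t, t ∈ Metric.ball t₀ (N t) := fun t => by
    exact_mod_cast Nat.lt_floor_add_one (dist t t₀)
  refine ⟨fun t => γ (N t) t, hγ₀ _, fun t => ?_⟩
  refine (hγ (N t) t (hN t)).congr_of_eventuallyEq ?_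
  filter_upwards [Metric.isOpen_ball.mem_nhds (hN t)] with u hu using hagree _ _ u (hN u) hu

end IntegralCurve

section PathShift

variable {d : ℕ}

@[simp]
theorem pathShift_apply (s : ℝ) (W : C(ℝ, EuclideanSpace ℝ (Fin d))) (t : ℝ) :
    pathShift s W t = W (t + s) :=
  rfl

@[simp]
theorem pathShift_zero (W : C(ℝ, EuclideanSpace ℝ (Fin d))) : pathShift 0 W = W := by
  ext t
  simp

theorem pathShift_pathShift (s v : ℝ) (W : C(ℝ, EuclideanSpace ℝ (Fin d))) :
    pathShift v (pathShift s W) = pathShift (s + v) W := by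
  ext t
  simp [add_assoc, add_comm v]

theorem pathShift_add_const (s : ℝ) (W : C(ℝ, EuclideanSpace ℝ (Fin d)))
    (c : EuclideanSpace ℝ (Fin d)) :
    pathShift s (W + ContinuousMap.const ℝ c) = pathShift s W + ContinuousMap.const ℝ c := by
  ext t
  simp

theorem continuous_pathShift (W : C(ℝ, EuclideanSpace ℝ (Fin d))) :
    Continuous fun s => pathShift s W :=
  ContinuousMap.continuous_of_continuous_uncurry _ (W.continuous.comp (by continuity))

noncomputable def shiftField (G : C(ℝ, EuclideanSpace ℝ (Fin d)) → EuclideanSpace ℝ (Fin d))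
    (W : C(ℝ, EuclideanSpace ℝ (Fin d))) :
    ℝ → EuclideanSpace ℝ (Fin d) → EuclideanSpace ℝ (Fin d) :=
  fun v x => G (pathShift v W + ContinuousMap.const ℝ x)

variable {G : C(ℝ, EuclideanSpace ℝ (Fin d)) → EuclideanSpace ℝ (Fin d)}

theorem continuous_uncurry_shiftField (hG : Continuous G) (W : C(ℝ, EuclideanSpace ℝ (Fin d))) :
    Continuous (uncurry (shiftField G W)) :=
  hG.comp (((continuous_pathShift W).comp continuous_fst).add
    (ContinuousMap.continuous_const'.comp continuous_snd))

theorem lipschitzWith_shiftField {L : ℝ≥0}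
    (hG : ∀ V x y, ‖G (V + ContinuousMap.const ℝ x) - G (V + ContinuousMap.const ℝ y)‖ ≤
      L * ‖x - y‖) (W : C(ℝ, EuclideanSpace ℝ (Fin d))) (v : ℝ) :
    LipschitzWith L (shiftField G W v) :=
  LipschitzWith.of_dist_le_mul fun x y => by
    rw [dist_eq_norm, dist_eq_norm]
    exact hG _ x y

theorem shiftField_pathShift_add_const (W : C(ℝ, EuclideanSpace ℝ (Fin d))) (s : ℝ)
    (c : EuclideanSpace ℝ (Fin d)) :
    shiftField G (pathShift s W + ContinuousMap.const ℝ c) =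
      fun v x => shiftField G W (s + v) (c + x) := by
  ext v x : 2
  simp only [shiftField, pathShift_add_const, pathShift_pathShift, add_assoc]
  rfl

end PathShift

/-- Existence and uniqueness of the shift-type flow `W^s = θ_s W + φ_W(s)𝟙` driven by a
bounded, continuous functional `G` that is Lipschitz along constant shifts, together
with the flow property. -/
theorem stmt_2 (d : ℕ)
    (G : C(ℝ, EuclideanSpace ℝ (Fin d)) → EuclideanSpace ℝ (Fin d))
    (hGb : ∃ M : ℝ, ∀ W, ‖G W‖ ≤ M) (hGc : Continuous G)
    (L : ℝ) (hL : 0 ≤ L)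
    (hLip : ∀ (V : C(ℝ, EuclideanSpace ℝ (Fin d))) (x y : EuclideanSpace ℝ (Fin d)),
      ‖G (V + ContinuousMap.const ℝ x) - G (V + ContinuousMap.const ℝ y)‖ ≤ L * ‖x - y‖) :
    ∃ φ : C(ℝ, EuclideanSpace ℝ (Fin d)) → ℝ → EuclideanSpace ℝ (Fin d),
      -- (i) existence: for every `W`, `φ W` is a continuous solution of the integral equation
      (∀ W, Continuous (φ W) ∧
        ∀ s : ℝ, φ W s = ∫ v in (0:ℝ)..s, G (pathShift v W + ContinuousMap.const ℝ (φ W v))) ∧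
      -- (i) uniqueness
      (∀ (W : C(ℝ, EuclideanSpace ℝ (Fin d))) (ψ : ℝ → EuclideanSpace ℝ (Fin d)),
        Continuous ψ →
        (∀ s : ℝ, ψ s = ∫ v in (0:ℝ)..s, G (pathShift v W + ContinuousMap.const ℝ (ψ v))) →
        ψ = φ W) ∧
      -- (ii) `W^0 = W`
      (∀ W, pathShift 0 W + ContinuousMap.const ℝ (φ W 0) = W) ∧
      -- (ii) `(W^s)^v = W^{s+v}`
      (∀ W (s v : ℝ),
        pathShift v (pathShift s W + ContinuousMap.const ℝ (φ W s)) +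
            ContinuousMap.const ℝ (φ (pathShift s W + ContinuousMap.const ℝ (φ W s)) v)
          = pathShift (s + v) W + ContinuousMap.const ℝ (φ W (s + v))) ∧
      -- (ii) equivalently, `φ_W(s+v) = φ_W(s) + φ_{W^s}(v)`
      (∀ W (s v : ℝ),
        φ W (s + v) = φ W s + φ (pathShift s W + ContinuousMap.const ℝ (φ W s)) v) := by
  obtain ⟨M, hM⟩ := hGb
  have hFc := continuous_uncurry_shiftField hGc
  have hFl := lipschitzWith_shiftField (L := ⟨L, hL⟩) hLip
  have hsol : ∀ W ψ, (Continuous ψ ∧ ∀ s, ψ s = ∫ v in (0:ℝ)..s, shiftField G W v (ψ v)) ↔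
      ψ 0 = 0 ∧ IsIntegralCurve ψ (shiftField G W) := fun W ψ => by
    simpa only [zero_add] using
      continuous_and_eq_integral_iff_isIntegralCurve (hFc W) (t₀ := 0) (x₀ := 0)
  choose φ hφ₀ hφ using fun W => exists_isIntegralCurve
    (fun x => (hFc W).comp (Continuous.prodMk_left x)) (fun _ _ => hM _) (hFl W) 0 0
  have huniq : ∀ W ψ, ψ 0 = 0 → IsIntegralCurve ψ (shiftField G W) → ψ = φ W :=
    fun W ψ hψ₀ hψ => hψ.eq_of_lipschitzWith (hFl W) (hφ W) (hψ₀.trans (hφ₀ W).symm)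
  have hflow : ∀ W (s v : ℝ),
      φ W (s + v) = φ W s + φ (pathShift s W + ContinuousMap.const ℝ (φ W s)) v := by
    intro W s v
    have h := huniq _ _ (by simp) (shiftField_pathShift_add_const W s (φ W s) ▸
      (hφ W).comp_const_add_sub s)
    rw [← congrFun h v, add_sub_cancel]
  refine ⟨φ, fun W => (hsol W (φ W)).2 ⟨hφ₀ W, hφ W⟩,
    fun W ψ hψc hψ => huniq W ψ ((hsol W ψ).1 ⟨hψc, hψ⟩).1 ((hsol W ψ).1 ⟨hψc, hψ⟩).2,
    fun W => ?_, fun W s v => ?_, hflow⟩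
  · ext t
    simp [hφ₀]
  · ext t
    simp [pathShift_add_const, pathShift_pathShift, hflow, add_assoc]
end

section
/- Under the stated hypotheses on F, for every s ∈ ℝ the map x ↦ φ(s,x) is differentiable on ℝ^N; for each fixed x ∈ ℝ^N the derivative Z(s) := D_xφ(s,x) is continuously differentiable in s and is the unique solution of the variational equation Z'(s) = D_xF(s, φ(s,x) + x) ∘ (Z(s) + Id), Z(0) = 0. In particular the mixed derivatives agree: ∂_s D_xφ(s,x) = D_x ∂_sφ(s,x) for all s ∈ ℝ and x ∈ ℝ^N. -/
/-!
Write `ψ(s, x) = φ(s, x) + x`, so that `ψ(·, x)` solves `y' = F(s, y)`, `y(0) = x`. The candidate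
for `D_xψ(s, x)` is the solution `W` of the linear equation `W' = D_xF(s, ψ(s, x)) ∘ W`,
`W(0) = id`; it exists globally as the sum of its Picard series, whose terms are bounded by
`(K|s|)ⁿ/n!`. Grönwall's inequality shows first that `ψ(s, ·)` is Lipschitz, and then, since
`D_xF` is uniformly continuous near the compact arc `{(t, ψ(t, x)) : |t| ≤ |s|}`, that
`ψ(s, y) - ψ(s, x) - W(s)(y - x) = o(‖y - x‖)`. Hence `D_xφ(s, x) = W(s) - id`, which solves the
variational equation; its uniqueness is that of linear equations, and the mixed derivatives agree
by the chain rule.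
-/

open Set Filter Topology intervalIntegral

section Gronwall

variable {B : Type*} [NormedAddCommGroup B] [NormedSpace ℝ B]

theorem norm_le_gronwallBound_of_nonneg {f f' : ℝ → B} {δ K ε T : ℝ}
    (hf : ∀ t, HasDerivAt f (f' t) t) (bound : ∀ t, |t| ≤ T → ‖f' t‖ ≤ K * ‖f t‖ + ε)
    (h0 : ‖f 0‖ ≤ δ) {s : ℝ} (hs : 0 ≤ s) (hsT : s ≤ T) :
    ‖f s‖ ≤ gronwallBound δ K ε s := by
  simpa using norm_le_gronwallBound_of_norm_deriv_right_le
    (fun t _ => (hf t).continuousAt.continuousWithinAt) (fun t _ => (hf t).hasDerivWithinAt) h0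
    (fun t ht => bound t (abs_le.2 ⟨by linarith [ht.1], by linarith [ht.2]⟩)) s ⟨hs, le_rfl⟩

theorem norm_le_gronwallBound_abs {f f' : ℝ → B} {δ K ε T : ℝ}
    (hf : ∀ t, HasDerivAt f (f' t) t) (bound : ∀ t, |t| ≤ T → ‖f' t‖ ≤ K * ‖f t‖ + ε)
    (h0 : ‖f 0‖ ≤ δ) {s : ℝ} (hs : |s| ≤ T) :
    ‖f s‖ ≤ gronwallBound δ K ε |s| := by
  rcases le_total 0 s with hs0 | hs0
  · rw [abs_of_nonneg hs0] at hs ⊢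
    exact norm_le_gronwallBound_of_nonneg hf bound h0 hs0 hs
  · rw [abs_of_nonpos hs0] at hs ⊢
    have hrev : ∀ t, HasDerivAt (fun u => f (-u)) (-f' (-t)) t := fun t => by
      simpa [Function.comp_def] using (hf (-t)).scomp t (hasDerivAt_neg t)
    simpa using norm_le_gronwallBound_of_nonneg hrev
      (fun t ht => by simpa using bound (-t) (by rwa [abs_neg])) (by simpa using h0)
      (neg_nonneg.2 hs0) hs

theorem gronwallBound_zero_le_mul_exp {K ε x : ℝ} (hK : 1 ≤ K) (hε : 0 ≤ ε) :
    gronwallBound 0 K ε x ≤ ε * Real.exp (K * x) := by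
  rw [gronwallBound_of_K_ne_0 (by positivity)]
  simp only [zero_mul, zero_add]
  rw [div_mul_eq_mul_div, div_le_iff₀ (by positivity)]
  nlinarith [Real.exp_pos (K * x), mul_le_mul_of_nonneg_left hK (Real.exp_pos (K * x)).le]

end Gronwall

theorem contDiff_one_of_hasDerivAt {X : Type*} [NormedAddCommGroup X] [NormedSpace ℝ X]
    {f f' : ℝ → X} (hf : ∀ t, HasDerivAt f (f' t) t) (hf' : Continuous f') : ContDiff ℝ 1 f :=
  contDiff_one_iff_deriv.2 ⟨fun t => (hf t).differentiableAt, by rwa [funext fun t => (hf t).deriv]⟩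

theorem abs_integral_abs_pow (n : ℕ) (s : ℝ) :
    |∫ t in (0:ℝ)..s, |t| ^ n| = |s| ^ (n + 1) / (n + 1) := by
  have hnonneg : ∀ s : ℝ, 0 ≤ s → ∫ t in (0:ℝ)..s, |t| ^ n = s ^ (n + 1) / (n + 1) := by
    intro s hs
    rw [integral_congr (g := fun t => t ^ n) fun t ht => by
      rw [uIcc_of_le hs] at ht; simp [abs_of_nonneg ht.1],
      integral_pow]
    simp
  rcases le_total 0 s with hs | hs
  · rw [hnonneg s hs, abs_of_nonneg hs, abs_of_nonneg (by positivity)]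
  · have hrefl : ∫ t in (0:ℝ)..s, |t| ^ n = -∫ t in (0:ℝ)..(-s), |t| ^ n := by
      simpa [integral_symm (-s)] using integral_comp_neg (a := 0) (b := s) fun t => |t| ^ n
    rw [hrefl, abs_neg, hnonneg (-s) (neg_nonneg.2 hs), abs_of_nonpos hs,
      abs_of_nonneg (div_nonneg (pow_nonneg (neg_nonneg.2 hs) _) (by positivity))]

theorem exists_norm_le_of_abs_le {X : Type*} [SeminormedAddCommGroup X] {f : ℝ → X}
    (hf : Continuous f) (T : ℝ) : ∃ K, 0 ≤ K ∧ ∀ t, |t| ≤ T → ‖f t‖ ≤ K := by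
  obtain ⟨C, hC⟩ := (isCompact_Icc (a := -T) (b := T)).exists_bound_of_continuousOn hf.continuousOn
  exact ⟨max C 0, le_max_right _ _, fun t ht => (hC t (abs_le.1 ht)).trans (le_max_left _ _)⟩

section LinearODE

open Nat

variable {B : Type*} [NormedAddCommGroup B] [NormedSpace ℝ B] {A : ℝ → B →L[ℝ] B}

/-- The Picard series `∑ n, linearPicardTerm A w₀ n` solves `w' = A w`, `w 0 = w₀`. -/
noncomputable def linearPicardTerm (A : ℝ → B →L[ℝ] B) (w₀ : B) : ℕ → ℝ → B
  | 0 => fun _ => w₀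
  | n + 1 => fun s => ∫ t in (0:ℝ)..s, A t (linearPicardTerm A w₀ n t)

theorem norm_linearPicardTerm_le (w₀ : B) {K T : ℝ} (hK : 0 ≤ K)
    (hAK : ∀ t, |t| ≤ T → ‖A t‖ ≤ K) (n : ℕ) {s : ℝ} (hs : |s| ≤ T) :
    ‖linearPicardTerm A w₀ n s‖ ≤ ‖w₀‖ * (K * |s|) ^ n / n ! := by
  induction n generalizing s with
  | zero => simp [linearPicardTerm]
  | succ n ih =>
    have hle : ∀ t ∈ uIoc (0:ℝ) s,
        ‖A t (linearPicardTerm A w₀ n t)‖ ≤ K * ‖w₀‖ * K ^ n / n ! * |t| ^ n := by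
      intro t ht
      have hts : |t| ≤ |s| := by simpa using abs_sub_left_of_mem_uIcc (uIoc_subset_uIcc ht)
      calc ‖A t (linearPicardTerm A w₀ n t)‖
          ≤ ‖A t‖ * ‖linearPicardTerm A w₀ n t‖ := (A t).le_opNorm _
        _ ≤ K * (‖w₀‖ * (K * |t|) ^ n / n !) :=
          mul_le_mul (hAK t (hts.trans hs)) (ih (hts.trans hs)) (norm_nonneg _) hK
        _ = K * ‖w₀‖ * K ^ n / n ! * |t| ^ n := by ring
    calc ‖linearPicardTerm A w₀ (n + 1) s‖
        ≤ |∫ t in (0:ℝ)..s, K * ‖w₀‖ * K ^ n / n ! * |t| ^ n| :=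
          norm_integral_le_abs_of_norm_le
            ((MeasureTheory.ae_restrict_mem measurableSet_uIoc).mono hle)
            (Continuous.intervalIntegrable (by fun_prop) _ _)
      _ = K * ‖w₀‖ * K ^ n / n ! * (|s| ^ (n + 1) / (n + 1)) := by
          rw [integral_const_mul, abs_mul, abs_integral_abs_pow, abs_of_nonneg (by positivity)]
      _ = ‖w₀‖ * (K * |s|) ^ (n + 1) / (n + 1)! := by
          rw [Nat.factorial_succ]; push_cast; field_simp; ring

theorem eq_of_hasDerivAt_clm_apply (hA : Continuous A) {f g : ℝ → B}
    (hf : ∀ t, HasDerivAt f (A t (f t)) t) (hg : ∀ t, HasDerivAt g (A t (g t)) t)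
    (h0 : f 0 = g 0) : f = g := by
  funext s
  obtain ⟨T, hsT⟩ : ∃ T, |s| < T := ⟨_, lt_add_one _⟩
  obtain ⟨K, -, hAK⟩ := exists_norm_le_of_abs_le hA T
  have hlip : ∀ t ∈ Ioo (-T) T, LipschitzOnWith K.toNNReal (A t) univ := fun t ht =>
    ((A t).lipschitz.weaken (by
      rw [← NNReal.coe_le_coe, coe_nnnorm, Real.coe_toNNReal']
      exact (hAK t (abs_lt.2 ht).le).trans (le_max_left _ _))).lipschitzOnWith
  exact ODE_solution_unique_of_mem_Ioo hlip
    ⟨by linarith [abs_nonneg s], by linarith [abs_nonneg s]⟩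
    (fun t _ => ⟨hf t, trivial⟩) (fun t _ => ⟨hg t, trivial⟩) h0 (abs_lt.1 hsT)

variable [CompleteSpace B]

theorem continuous_linearPicardTerm (hA : Continuous A) (w₀ : B) (n : ℕ) :
    Continuous (linearPicardTerm A w₀ n) := by
  induction n with
  | zero => exact continuous_const
  | succ n ih =>
    exact continuous_iff_continuousAt.2 fun s =>
      ((hA.clm_apply ih).integral_hasStrictDerivAt 0 s).hasDerivAt.continuousAt

theorem hasDerivAt_linearPicardTerm_succ (hA : Continuous A) (w₀ : B) (n : ℕ) (s : ℝ) :
    HasDerivAt (linearPicardTerm A w₀ (n + 1)) (A s (linearPicardTerm A w₀ n s)) s :=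
  ((hA.clm_apply (continuous_linearPicardTerm hA w₀ n)).integral_hasStrictDerivAt 0 s).hasDerivAt

theorem exists_hasDerivAt_clm_apply (hA : Continuous A) (w₀ : B) :
    ∃ w : ℝ → B, w 0 = w₀ ∧ ∀ s, HasDerivAt w (A s (w s)) s := by
  refine ⟨fun s => w₀ + ∑' n, linearPicardTerm A w₀ (n + 1) s, by simp [linearPicardTerm],
    fun s => ?_⟩
  obtain ⟨T, hsT⟩ : ∃ T, |s| < T := ⟨_, lt_add_one _⟩
  obtain ⟨K, hK, hAK⟩ := exists_norm_le_of_abs_le hA T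
  have hIoo : ∀ t ∈ Ioo (-T) T, |t| ≤ T := fun t ht => (abs_lt.2 ht).le
  have hs : s ∈ Ioo (-T) T := abs_lt.1 hsT
  have h0 : (0:ℝ) ∈ Ioo (-T) T := ⟨by linarith [abs_nonneg s], by linarith [abs_nonneg s]⟩
  have hbound : ∀ n t, |t| ≤ T → ‖linearPicardTerm A w₀ n t‖ ≤ ‖w₀‖ * (K * T) ^ n / n ! :=
    fun n t ht => (norm_linearPicardTerm_le w₀ hK hAK n ht).trans (by gcongr)
  have hsum : Summable fun n => ‖w₀‖ * (K * T) ^ n / n ! := by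
    simpa [mul_div_assoc] using (Real.summable_pow_div_factorial (K * T)).mul_left ‖w₀‖
  have hderiv := hasDerivAt_tsum_of_isPreconnected (hsum.mul_left K) isOpen_Ioo isPreconnected_Ioo
    (fun n t _ => hasDerivAt_linearPicardTerm_succ hA w₀ n t)
    (fun n t ht => ((A t).le_opNorm _).trans
      (mul_le_mul (hAK t (hIoo t ht)) (hbound n t (hIoo t ht)) (norm_nonneg _) hK))
    h0 (by simp [linearPicardTerm]) hs
  have hterms : Summable fun n => linearPicardTerm A w₀ n s :=
    .of_norm_bounded hsum fun n => hbound n s (hIoo s hs)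
  convert hderiv.const_add w₀ using 1
  rw [← (A s).map_tsum hterms, hterms.tsum_eq_zero_add]
  rfl

end LinearODE

theorem eq_of_hasDerivAt_comp_add_id {E : Type*} [NormedAddCommGroup E] [NormedSpace ℝ E]
    {A : ℝ → E →L[ℝ] E} (hA : Continuous A) {Z Z' : ℝ → E →L[ℝ] E}
    (hZ : ∀ t, HasDerivAt Z ((A t).comp (Z t + ContinuousLinearMap.id ℝ E)) t)
    (hZ' : ∀ t, HasDerivAt Z' ((A t).comp (Z' t + ContinuousLinearMap.id ℝ E)) t)
    (h0 : Z 0 = Z' 0) : Z = Z' := by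
  have key := eq_of_hasDerivAt_clm_apply ((ContinuousLinearMap.compL ℝ E E E).continuous.comp hA)
    (f := fun t => Z t + ContinuousLinearMap.id ℝ E)
    (g := fun t => Z' t + ContinuousLinearMap.id ℝ E)
    (fun t => (hZ t).add_const _) (fun t => (hZ' t).add_const _) (by simp [h0])
  funext t
  simpa using congrFun key t

theorem IsCompact.exists_pos_forall_norm_sub_sub_fderiv_le {E E' : Type*}
    [NormedAddCommGroup E] [NormedSpace ℝ E] [NormedAddCommGroup E'] [NormedSpace ℝ E']
    {F : ℝ → E → E'} (hFd : ∀ t, Differentiable ℝ (F t))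
    (hDF : Continuous fun p : ℝ × E => fderiv ℝ (F p.1) p.2) {S : Set (ℝ × E)}
    (hS : IsCompact S) {ε : ℝ} (hε : 0 < ε) :
    ∃ δ > 0, ∀ p ∈ S, ∀ v : E, ‖v‖ < δ →
      ‖F p.1 (p.2 + v) - F p.1 p.2 - fderiv ℝ (F p.1) p.2 v‖ ≤ ε * ‖v‖ := by
  obtain ⟨δ, hδ, hclose⟩ := Metric.mem_uniformity_dist.1
    (hS.uniformContinuousAt_of_continuousAt _ (fun p _ => hDF.continuousAt)
      (Metric.dist_mem_uniformity hε))
  refine ⟨δ, hδ, fun p hp v hv => ?_⟩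
  have hball : ∀ z ∈ Metric.ball p.2 δ, ‖fderiv ℝ (F p.1) z - fderiv ℝ (F p.1) p.2‖ ≤ ε := by
    intro z hz
    rw [← dist_eq_norm, dist_comm]
    refine (hclose (a := p) (b := (p.1, z)) ?_ hp).le
    rw [Prod.dist_eq, dist_self, dist_comm]
    exact max_lt hδ hz
  simpa using (convex_ball p.2 δ).norm_image_sub_le_of_norm_fderiv_le'
    (fun z _ => (hFd p.1).differentiableAt) hball (Metric.mem_ball_self hδ)
    (by simpa using hv : p.2 + v ∈ Metric.ball p.2 δ)

section Flow

variable {E : Type*} [NormedAddCommGroup E] [NormedSpace ℝ E] {F : ℝ → E → E} {ψ : ℝ → E → E}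

theorem norm_sub_le_mul_exp_of_hasDerivAt (hFd : ∀ t, Differentiable ℝ (F t)) {u w : ℝ → E}
    (hu : ∀ t, HasDerivAt u (F t (u t)) t) (hw : ∀ t, HasDerivAt w (F t (w t)) t) {K T : ℝ}
    (hK : ∀ t, |t| ≤ T → ∀ z, ‖fderiv ℝ (F t) z‖ ≤ K) {s : ℝ} (hs : |s| ≤ T) :
    ‖w s - u s‖ ≤ ‖w 0 - u 0‖ * Real.exp (K * |s|) := by
  have hlip : ∀ t, |t| ≤ T → ‖F t (w t) - F t (u t)‖ ≤ K * ‖w t - u t‖ + 0 := fun t ht => by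
    simpa using convex_univ.norm_image_sub_le_of_norm_fderiv_le
      (fun z _ => (hFd t).differentiableAt) (fun z _ => hK t ht z) (mem_univ (u t)) (mem_univ (w t))
  simpa [gronwallBound_ε0] using
    norm_le_gronwallBound_abs (fun t => (hw t).sub (hu t)) hlip le_rfl hs

theorem norm_sub_sub_clm_apply_le {u w : ℝ → E} {W : ℝ → E →L[ℝ] E}
    (hu : ∀ t, HasDerivAt u (F t (u t)) t) (hw : ∀ t, HasDerivAt w (F t (w t)) t)
    (hW0 : W 0 = ContinuousLinearMap.id ℝ E)
    (hW : ∀ t, HasDerivAt W ((fderiv ℝ (F t) (u t)).comp (W t)) t) {K T e : ℝ}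
    (hK : ∀ t, |t| ≤ T → ‖fderiv ℝ (F t) (u t)‖ ≤ K)
    (he : ∀ t, |t| ≤ T →
      ‖F t (w t) - F t (u t) - fderiv ℝ (F t) (u t) (w t - u t)‖ ≤ e)
    {s : ℝ} (hs : |s| ≤ T) :
    ‖w s - u s - W s (w 0 - u 0)‖ ≤ gronwallBound 0 K e |s| := by
  set v := w 0 - u 0
  have hderiv : ∀ t, HasDerivAt (fun t => w t - u t - W t v)
      (F t (w t) - F t (u t) - fderiv ℝ (F t) (u t) (W t v)) t := fun t => by
    simpa using ((hw t).fun_sub (hu t)).fun_sub ((hW t).clm_apply (hasDerivAt_const t v))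
  refine norm_le_gronwallBound_abs hderiv (fun t ht => ?_) (by simp [v, hW0]) hs
  -- `θ t := w t - u t - W t v` obeys `θ' = DF θ + (F w - F u - DF (w - u))`
  have hsplit : F t (w t) - F t (u t) - fderiv ℝ (F t) (u t) (W t v) =
      fderiv ℝ (F t) (u t) (w t - u t - W t v) +
        (F t (w t) - F t (u t) - fderiv ℝ (F t) (u t) (w t - u t)) := by
    simp only [map_sub]; abel
  rw [hsplit]
  calc _ ≤ ‖fderiv ℝ (F t) (u t)‖ * ‖w t - u t - W t v‖ + e :=
        norm_add_le_of_le ((fderiv ℝ (F t) (u t)).le_opNorm _) (he t ht)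
    _ ≤ K * ‖w t - u t - W t v‖ + e := by gcongr; exact hK t ht

theorem continuous_fderiv_apply_of_hasDerivAt
    (hDFc : Continuous fun p : ℝ × E => fderiv ℝ (F p.1) p.2) {u : ℝ → E}
    (hu : ∀ t, HasDerivAt u (F t (u t)) t) : Continuous fun t => fderiv ℝ (F t) (u t) :=
  hDFc.comp (continuous_id.prodMk (continuous_iff_continuousAt.2 fun t => (hu t).continuousAt))

theorem hasFDerivAt_of_hasDerivAt_variational (hFd : ∀ t, Differentiable ℝ (F t))
    (hDFc : Continuous fun p : ℝ × E => fderiv ℝ (F p.1) p.2)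
    (hDF : ∀ T, ∃ K, ∀ t, |t| ≤ T → ∀ z, ‖fderiv ℝ (F t) z‖ ≤ K)
    (hψ : ∀ t x, HasDerivAt (fun t => ψ t x) (F t (ψ t x)) t) (hψ0 : ∀ x, ψ 0 x = x)
    {x : E} {W : ℝ → E →L[ℝ] E} (hW0 : W 0 = ContinuousLinearMap.id ℝ E)
    (hW : ∀ t, HasDerivAt W ((fderiv ℝ (F t) (ψ t x)).comp (W t)) t) (s : ℝ) :
    HasFDerivAt (ψ s) (W s) x := by
  obtain ⟨K₀, hK₀⟩ := hDF |s|
  set K := max K₀ 1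
  have hK1 : 1 ≤ K := le_max_right _ _
  have hK : ∀ t, |t| ≤ |s| → ∀ z, ‖fderiv ℝ (F t) z‖ ≤ K := fun t ht z =>
    (hK₀ t ht z).trans (le_max_left _ _)
  set L := Real.exp (K * |s|)
  have hL : 0 < L := Real.exp_pos _
  have hS : IsCompact ((fun t => (t, ψ t x)) '' Icc (-|s|) |s|) :=
    isCompact_Icc.image (continuous_id.prodMk
      (continuous_iff_continuousAt.2 fun t => (hψ t x).continuousAt))
  refine .of_isLittleO <| Asymptotics.isLittleO_iff.2 fun c hc => ?_
  obtain ⟨δ, hδ, hlin⟩ :=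
    hS.exists_pos_forall_norm_sub_sub_fderiv_le hFd hDFc (ε := c / L ^ 2) (by positivity)
  filter_upwards [Metric.ball_mem_nhds x (div_pos hδ hL)] with y hy
  rw [Metric.mem_ball, dist_eq_norm, lt_div_iff₀ hL] at hy
  have hdist : ∀ t, |t| ≤ |s| → ‖ψ t y - ψ t x‖ ≤ ‖y - x‖ * L := fun t ht => by
    refine (norm_sub_le_mul_exp_of_hasDerivAt hFd (hψ · x) (hψ · y) hK ht).trans ?_
    rw [hψ0, hψ0]
    exact mul_le_mul_of_nonneg_left
      (Real.exp_le_exp.2 (mul_le_mul_of_nonneg_left ht (by linarith))) (norm_nonneg _)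
  have he : ∀ t, |t| ≤ |s| → ‖F t (ψ t y) - F t (ψ t x) -
      fderiv ℝ (F t) (ψ t x) (ψ t y - ψ t x)‖ ≤ c / L ^ 2 * (‖y - x‖ * L) := fun t ht => by
    have := hlin (t, ψ t x) ⟨t, abs_le.1 ht, rfl⟩ _ ((hdist t ht).trans_lt hy)
    simp only [add_sub_cancel] at this
    exact this.trans (by gcongr; exact hdist t ht)
  calc ‖ψ s y - ψ s x - W s (y - x)‖
      ≤ gronwallBound 0 K (c / L ^ 2 * (‖y - x‖ * L)) |s| := by
        simpa [hψ0] using norm_sub_sub_clm_apply_le (hψ · x) (hψ · y) hW0 hW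
          (fun t ht => hK t ht _) he le_rfl
    _ ≤ c / L ^ 2 * (‖y - x‖ * L) * L :=
        gronwallBound_zero_le_mul_exp hK1 (by positivity)
    _ = c * ‖y - x‖ := by field_simp

theorem exists_hasFDerivAt_variational [CompleteSpace E] (hFd : ∀ t, Differentiable ℝ (F t))
    (hDFc : Continuous fun p : ℝ × E => fderiv ℝ (F p.1) p.2)
    (hDF : ∀ T, ∃ K, ∀ t, |t| ≤ T → ∀ z, ‖fderiv ℝ (F t) z‖ ≤ K)
    (hψ : ∀ t x, HasDerivAt (fun t => ψ t x) (F t (ψ t x)) t) (hψ0 : ∀ x, ψ 0 x = x) (x : E) :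
    ∃ W : ℝ → E →L[ℝ] E, W 0 = ContinuousLinearMap.id ℝ E ∧
      (∀ t, HasDerivAt W ((fderiv ℝ (F t) (ψ t x)).comp (W t)) t) ∧
      ∀ s, HasFDerivAt (ψ s) (W s) x := by
  obtain ⟨W, hW0, hW⟩ := exists_hasDerivAt_clm_apply
    ((ContinuousLinearMap.compL ℝ E E E).continuous.comp
      (continuous_fderiv_apply_of_hasDerivAt hDFc (hψ · x)))
    (ContinuousLinearMap.id ℝ E)
  exact ⟨W, hW0, hW, hasFDerivAt_of_hasDerivAt_variational hFd hDFc hDF hψ hψ0 hW0 hW⟩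

end Flow

theorem stmt_5_general (N : ℕ)
    (F : ℝ → EuclideanSpace ℝ (Fin N) → EuclideanSpace ℝ (Fin N))
    (φ : ℝ → EuclideanSpace ℝ (Fin N) → EuclideanSpace ℝ (Fin N))
    (hFd : ∀ s : ℝ, Differentiable ℝ (F s))
    (hDFc : Continuous (fun p : ℝ × EuclideanSpace ℝ (Fin N) => fderiv ℝ (F p.1) p.2))
    (hbd : ∀ s₀ > (0:ℝ), ∃ M : ℝ, ∀ s ∈ Set.Icc (-s₀) s₀,
      ∀ x : EuclideanSpace ℝ (Fin N), ‖F s x‖ ≤ M ∧ ‖fderiv ℝ (F s) x‖ ≤ M)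
    (hφ0 : ∀ x, φ 0 x = 0)
    (hφ' : ∀ (s : ℝ) (x : EuclideanSpace ℝ (Fin N)),
      HasDerivAt (fun t => φ t x) (F s (φ s x + x)) s) :
    -- `x ↦ φ(s,x)` is differentiable
    (∀ s : ℝ, Differentiable ℝ (φ s)) ∧
    -- the variational equation for `Z(s) = D_xφ(s,x)`
    (∀ x : EuclideanSpace ℝ (Fin N),
      ContDiff ℝ 1 (fun s : ℝ => fderiv ℝ (φ s) x) ∧
      fderiv ℝ (φ 0) x = 0 ∧
      (∀ s : ℝ,
        HasDerivAt (fun t : ℝ => fderiv ℝ (φ t) x)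
          ((fderiv ℝ (F s) (φ s x + x)).comp
            (fderiv ℝ (φ s) x + ContinuousLinearMap.id ℝ (EuclideanSpace ℝ (Fin N)))) s) ∧
      -- uniqueness of the solution of the variational equation
      (∀ Z : ℝ → EuclideanSpace ℝ (Fin N) →L[ℝ] EuclideanSpace ℝ (Fin N),
        Z 0 = 0 →
        (∀ s : ℝ,
          HasDerivAt Z
            ((fderiv ℝ (F s) (φ s x + x)).comp
              (Z s + ContinuousLinearMap.id ℝ (EuclideanSpace ℝ (Fin N)))) s) →
        Z = fun s => fderiv ℝ (φ s) x)) ∧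
    -- the mixed derivatives agree: `∂_s D_xφ(s,x) = D_x ∂_sφ(s,x)`
    (∀ (s : ℝ) (x : EuclideanSpace ℝ (Fin N)),
      deriv (fun t : ℝ => fderiv ℝ (φ t) x) s = fderiv ℝ (fun y => F s (φ s y + y)) x) := by
  have hDF : ∀ T, ∃ K, ∀ t, |t| ≤ T → ∀ z, ‖fderiv ℝ (F t) z‖ ≤ K := fun T => by
    obtain ⟨M, hM⟩ := hbd (|T| + 1) (by positivity)
    exact ⟨M, fun t ht z =>
      (hM t (abs_le.1 (ht.trans ((le_abs_self T).trans (lt_add_one _).le))) z).2⟩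
  have hψ : ∀ t x, HasDerivAt (fun t => φ t x + x) (F t (φ t x + x)) t :=
    fun t x => (hφ' t x).add_const x
  have hA : ∀ x, Continuous fun t => fderiv ℝ (F t) (φ t x + x) :=
    fun x => continuous_fderiv_apply_of_hasDerivAt hDFc (hψ · x)
  choose W hW0 hW hψW using
    exists_hasFDerivAt_variational hFd hDFc hDF hψ (fun x => by simp [hφ0])
  have hφW : ∀ s x, HasFDerivAt (φ s) (W x s - ContinuousLinearMap.id ℝ _) x := fun s x => by
    simpa using (hψW x s).fun_sub (hasFDerivAt_id x)
  have hZ : ∀ x s, HasDerivAt (fun t => fderiv ℝ (φ t) x) ((fderiv ℝ (F s) (φ s x + x)).comp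
      (fderiv ℝ (φ s) x + ContinuousLinearMap.id ℝ _)) s := fun x s => by
    simpa [funext fun t => (hφW t x).fderiv, (hφW s x).fderiv] using
      (hW x s).sub_const (ContinuousLinearMap.id ℝ _)
  have hZ0 : ∀ x, fderiv ℝ (φ 0) x = 0 := by simp [funext hφ0]
  refine ⟨fun s x => (hφW s x).differentiableAt, fun x => ⟨?_, hZ0 x, hZ x, ?_⟩, fun s x => ?_⟩
  · exact contDiff_one_of_hasDerivAt (hZ x) ((hA x).clm_comp
      ((Differentiable.continuous fun t => (hZ x t).differentiableAt).add continuous_const))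
  · exact fun Z hZ0' hZd => eq_of_hasDerivAt_comp_add_id (hA x) hZd (hZ x) (hZ0'.trans (hZ0 x).symm)
  · have hcomp : HasFDerivAt (fun y => F s (φ s y + y))
        ((fderiv ℝ (F s) (φ s x + x)).comp (fderiv ℝ (φ s) x + ContinuousLinearMap.id ℝ _)) x :=
      (hFd s _).hasFDerivAt.comp x ((hφW s x).differentiableAt.hasFDerivAt.add (hasFDerivAt_id x))
    rw [(hZ x s).deriv, hcomp.fderiv]

/-- Differentiability of the solution `φ(s,·)` of `∂_sφ(s,x) = F(s, φ(s,x) + x)`,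
`φ(0,x) = 0`, in the initial point, the variational equation for `Z(s) = D_xφ(s,x)`
(with uniqueness), and equality of the mixed derivatives. -/
theorem stmt_5 (N : ℕ)
    (F : ℝ → EuclideanSpace ℝ (Fin N) → EuclideanSpace ℝ (Fin N))
    (φ : ℝ → EuclideanSpace ℝ (Fin N) → EuclideanSpace ℝ (Fin N))
    (hFc : Continuous (fun p : ℝ × EuclideanSpace ℝ (Fin N) => F p.1 p.2))
    (hFd : ∀ s : ℝ, Differentiable ℝ (F s))
    (hDFc : Continuous (fun p : ℝ × EuclideanSpace ℝ (Fin N) => fderiv ℝ (F p.1) p.2))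
    (hbd : ∀ s₀ > (0:ℝ), ∃ M : ℝ, ∀ s ∈ Set.Icc (-s₀) s₀,
      ∀ x : EuclideanSpace ℝ (Fin N), ‖F s x‖ ≤ M ∧ ‖fderiv ℝ (F s) x‖ ≤ M)
    (hφ0 : ∀ x, φ 0 x = 0)
    (hφ' : ∀ (s : ℝ) (x : EuclideanSpace ℝ (Fin N)),
      HasDerivAt (fun t => φ t x) (F s (φ s x + x)) s) :
    -- `x ↦ φ(s,x)` is differentiable
    (∀ s : ℝ, Differentiable ℝ (φ s)) ∧
    -- the variational equation for `Z(s) = D_xφ(s,x)`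
    (∀ x : EuclideanSpace ℝ (Fin N),
      ContDiff ℝ 1 (fun s : ℝ => fderiv ℝ (φ s) x) ∧
      fderiv ℝ (φ 0) x = 0 ∧
      (∀ s : ℝ,
        HasDerivAt (fun t : ℝ => fderiv ℝ (φ t) x)
          ((fderiv ℝ (F s) (φ s x + x)).comp
            (fderiv ℝ (φ s) x + ContinuousLinearMap.id ℝ (EuclideanSpace ℝ (Fin N)))) s) ∧
      -- uniqueness of the solution of the variational equation
      (∀ Z : ℝ → EuclideanSpace ℝ (Fin N) →L[ℝ] EuclideanSpace ℝ (Fin N),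
        Z 0 = 0 →
        (∀ s : ℝ,
          HasDerivAt Z
            ((fderiv ℝ (F s) (φ s x + x)).comp
              (Z s + ContinuousLinearMap.id ℝ (EuclideanSpace ℝ (Fin N)))) s) →
        Z = fun s => fderiv ℝ (φ s) x)) ∧
    -- the mixed derivatives agree: `∂_s D_xφ(s,x) = D_x ∂_sφ(s,x)`
    (∀ (s : ℝ) (x : EuclideanSpace ℝ (Fin N)),
      deriv (fun t : ℝ => fderiv ℝ (φ t) x) s = fderiv ℝ (fun y => F s (φ s y + y)) x) :=
  stmt_5_general N F φ hFd hDFc hbd hφ0 hφ'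
end

section
/- Let d ≥ 1 and λ ∈ (0,1) with λ ≠ 1/2. For every subexponential two-sided sequence (a_z)_{z∈ℤ} in ℝ^d there exists exactly one subexponential two-sided sequence (b_z)_{z∈ℤ} in ℝ^d such that λ b_{z−1} + (1−λ) b_z = a_z for every z ∈ ℤ. -/
open Filter Topology

/-- A two-sided sequence `(c_z)_{z∈ℤ}` in `ℝ^d` is subexponential if
`log(1 + ‖c_z‖)/|z| → 0` as `|z| → ∞`. -/
def IsSubexponential {d : ℕ} (c : ℤ → EuclideanSpace ℝ (Fin d)) : Prop :=
  Tendsto (fun z : ℤ => Real.log (1 + ‖c z‖) / |(z : ℝ)|) cofinite (𝓝 0)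

/-!
For `λ < 1/2` put `r = -λ/(1-λ)`, so that `|r| < 1` and the equation reads
`b_z = a_z/(1-λ) + r b_{z-1}`. Its solution is the one-sided geometric series
`b_z = Σ_k r^k a_{z-k}/(1-λ)`: since `a` grows slower than `exp(ε|z|)` for every `ε > 0`, the series
converges and `b` is again subexponential. A subexponential solution `c` of the homogeneous equation
satisfies `‖c_z‖ = |r|^n ‖c_{z-n}‖`, which tends to `0` as `n → ∞`, so `c = 0`. The case `λ > 1/2`
reduces to `1 - λ < 1/2` through the reflection `b_z ↦ b_{-z}`, `a_z ↦ a_{1-z}`.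
-/

open Asymptotics Real

lemma tendsto_abs_intCast_cofinite : Tendsto (fun z : ℤ => |(z : ℝ)|) cofinite atTop := by
  rw [← cocompact_eq_cofinite]
  exact tendsto_norm_cocompact_atTop.congr Int.norm_eq_abs

lemma exists_pos_mul_exp_lt_one {r : ℝ} (hr : r < 1) : ∃ ε > 0, r * exp ε < 1 := by
  have h : ∀ᶠ ε in 𝓝 (0 : ℝ), r * exp ε < 1 :=
    (continuous_const.mul continuous_exp).continuousAt.eventually_lt continuousAt_const
      (by simpa using hr)
  obtain ⟨ε, hε, hlt⟩ := ((h.filter_mono nhdsWithin_le_nhds).and self_mem_nhdsWithin :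
    ∀ᶠ ε in 𝓝[>] (0 : ℝ), _).exists
  exact ⟨ε, hlt, hε⟩

lemma log_div_abs_le_iff {x ε : ℝ} {z : ℤ} (hx : 0 < x) (hz : z ≠ 0) :
    log x / |(z : ℝ)| ≤ ε ↔ x ≤ exp (ε * |(z : ℝ)|) := by
  rw [div_le_iff₀ (by positivity), log_le_iff_le_exp hx]

section Subexponential

variable {d : ℕ} {c c' : ℤ → EuclideanSpace ℝ (Fin d)}

lemma isSubexponential_iff_eventually_le :
    IsSubexponential c ↔ ∀ ε > 0, ∀ᶠ z in cofinite, 1 + ‖c z‖ ≤ exp (ε * |(z : ℝ)|) := by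
  refine ⟨fun hc ε hε => ?_, fun h => tendsto_order.2 ⟨fun a ha => ?_, fun a ha => ?_⟩⟩
  · filter_upwards [hc.eventually (eventually_le_nhds hε), eventually_cofinite_ne 0] with z hz hz0
    exact (log_div_abs_le_iff (by positivity) hz0).1 hz
  · exact Eventually.of_forall fun z =>
      ha.trans_le (div_nonneg (log_nonneg (by simp)) (abs_nonneg _))
  · filter_upwards [h (a / 2) (by positivity), eventually_cofinite_ne 0] with z hz hz0
    exact ((log_div_abs_le_iff (by positivity) hz0).2 hz).trans_lt (by linarith)

lemma isSubexponential_iff_isBigO :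
    IsSubexponential c ↔ ∀ ε > 0, c =O[cofinite] fun z : ℤ => exp (ε * |(z : ℝ)|) := by
  refine isSubexponential_iff_eventually_le.trans ⟨fun h ε hε => ?_, fun h ε hε => ?_⟩
  · refine IsBigO.of_bound 1 ((h ε hε).mono fun z hz => ?_)
    rw [norm_of_nonneg (exp_pos _).le, one_mul]
    linarith
  · have hexp : (fun z : ℤ => exp (ε / 2 * |(z : ℝ)|)) =o[cofinite]
        fun z : ℤ => exp (ε * |(z : ℝ)|) :=
      isLittleO_exp_comp_exp_comp.2 <|
        (tendsto_abs_intCast_cofinite.const_mul_atTop (half_pos hε)).congr fun z => by ring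
    have hone : (fun _ : ℤ => (1 : ℝ)) =o[cofinite] fun z : ℤ => exp (ε * |(z : ℝ)|) :=
      (isLittleO_one_left_iff ℝ).2 <| by
        simpa using tendsto_abs_intCast_cofinite.const_mul_atTop hε
    have := (hone.add ((h (ε / 2) (by positivity)).norm_left.trans_isLittleO hexp)).bound one_pos
    filter_upwards [this] with z hz
    have hpos : 0 ≤ 1 + ‖c z‖ := by positivity
    simpa [norm_of_nonneg (exp_pos _).le, abs_of_nonneg hpos] using hz

lemma IsSubexponential.exists_bound (hc : IsSubexponential c) {ε : ℝ} (hε : 0 < ε) :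
    ∃ C, ∀ z : ℤ, ‖c z‖ ≤ C * exp (ε * |(z : ℝ)|) := by
  simpa [norm_of_nonneg (exp_pos _).le] using
    (isBigO_cofinite_iff fun z h => absurd h (exp_pos _).ne').1
      (isSubexponential_iff_isBigO.1 hc ε hε)

lemma IsSubexponential.sub (hc : IsSubexponential c) (hc' : IsSubexponential c') :
    IsSubexponential (c - c') :=
  isSubexponential_iff_isBigO.2 fun ε hε =>
    (isSubexponential_iff_isBigO.1 hc ε hε).sub (isSubexponential_iff_isBigO.1 hc' ε hε)

lemma IsSubexponential.const_smul (hc : IsSubexponential c) (t : ℝ) : IsSubexponential (t • c) :=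
  isSubexponential_iff_isBigO.2 fun ε hε =>
    (isSubexponential_iff_isBigO.1 hc ε hε).const_smul_left t

lemma IsSubexponential.comp_sub_left (hc : IsSubexponential c) (m : ℤ) :
    IsSubexponential fun z => c (m - z) := by
  refine isSubexponential_iff_isBigO.2 fun ε hε => ?_
  have hshift : (fun z : ℤ => exp (ε * |((m - z : ℤ) : ℝ)|)) =O[cofinite]
      fun z : ℤ => exp (ε * |(z : ℝ)|) := by
    refine IsBigO.of_bound (exp (ε * |(m : ℝ)|)) (Eventually.of_forall fun z => ?_)
    simp only [norm_of_nonneg (exp_pos _).le, ← exp_add, ← mul_add, Int.cast_sub]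
    gcongr
    exact abs_sub _ _
  exact ((isSubexponential_iff_isBigO.1 hc ε hε).comp_tendsto
    (sub_right_injective.tendsto_cofinite)).trans hshift

end Subexponential

section GeometricConvolution

variable {E : Type*} [NormedAddCommGroup E]

lemma norm_comp_sub_le {a : ℤ → E} {C ε : ℝ} (hε : 0 ≤ ε)
    (ha : ∀ z : ℤ, ‖a z‖ ≤ C * exp (ε * |(z : ℝ)|)) (z : ℤ) (k : ℕ) :
    ‖a (z - k)‖ ≤ C * exp (ε * |(z : ℝ)|) * exp ε ^ k := by
  have hC : 0 ≤ C := by simpa using (norm_nonneg _).trans (ha 0)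
  calc ‖a (z - k)‖ ≤ C * exp (ε * |((z - k : ℤ) : ℝ)|) := ha _
    _ ≤ C * exp (ε * (|(z : ℝ)| + k)) := by
      gcongr
      simpa using abs_sub (z : ℝ) k
    _ = C * exp (ε * |(z : ℝ)|) * exp ε ^ k := by
      rw [← exp_nat_mul, mul_add, exp_add, mul_comm ε k, mul_assoc]

lemma summable_and_tsum_le_of_exp_bound {a : ℤ → E} {r C ε : ℝ} (hr : 0 ≤ r) (hε : 0 ≤ ε)
    (hrε : r * exp ε < 1) (ha : ∀ z : ℤ, ‖a z‖ ≤ C * exp (ε * |(z : ℝ)|)) (z : ℤ) :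
    Summable (fun k : ℕ => r ^ k * ‖a (z - k)‖) ∧
      ∑' k : ℕ, r ^ k * ‖a (z - k)‖ ≤ C * exp (ε * |(z : ℝ)|) / (1 - r * exp ε) := by
  have hterm (k : ℕ) : r ^ k * ‖a (z - k)‖ ≤ C * exp (ε * |(z : ℝ)|) * (r * exp ε) ^ k := by
    calc r ^ k * ‖a (z - k)‖ ≤ r ^ k * (C * exp (ε * |(z : ℝ)|) * exp ε ^ k) := by
          gcongr; exact norm_comp_sub_le hε ha z k
      _ = C * exp (ε * |(z : ℝ)|) * (r * exp ε) ^ k := by ring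
  have hgeom := (hasSum_geometric_of_lt_one (by positivity) hrε).mul_left (C * exp (ε * |(z : ℝ)|))
  have hsum : Summable (fun k : ℕ => r ^ k * ‖a (z - k)‖) :=
    hgeom.summable.of_nonneg_of_le (fun k => by positivity) hterm
  exact ⟨hsum, hasSum_le hterm hsum.hasSum hgeom⟩

variable [NormedSpace ℝ E]

lemma norm_pow_smul (r : ℝ) (k : ℕ) (v : E) : ‖r ^ k • v‖ = |r| ^ k * ‖v‖ := by
  rw [norm_smul, norm_pow, Real.norm_eq_abs]

/-- The causal solution `Σ_k r^k a_{z-k}` of `x_z = a_z + r x_{z-1}`; the `tsum` is junk (`0`)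
where the series diverges. -/
noncomputable def geomConv (r : ℝ) (a : ℤ → E) (z : ℤ) : E := ∑' k : ℕ, r ^ k • a (z - k)

lemma geomConv_eq_add_smul {r : ℝ} {a : ℤ → E} {z : ℤ}
    (hs : Summable fun k : ℕ => r ^ k • a (z - 1 - k)) :
    geomConv r a z = a z + r • geomConv r a (z - 1) := by
  have hshift (k : ℕ) : r ^ (k + 1) • a (z - (k + 1 : ℕ)) = r • (r ^ k • a (z - 1 - k)) := by
    rw [smul_smul, pow_succ', Nat.cast_succ, sub_add_eq_sub_sub_swap]
  rw [geomConv, geomConv, tsum_eq_zero_add' (by simpa only [hshift] using hs.const_smul r)]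
  simp only [hshift, pow_zero, one_smul, Nat.cast_zero, sub_zero]
  rw [tsum_const_smul'']

end GeometricConvolution

section Recurrence

variable {E : Type*} [AddCommGroup E]

lemma smul_add_smul_eq_iff {K : Type*} [Field K] [Module K E] {s t : K} {u v w : E} (ht : t ≠ 0) :
    s • u + t • v = w ↔ v = t⁻¹ • w + (-(s / t)) • u := by
  constructor
  · rintro rfl
    rw [smul_add, smul_smul, inv_smul_smul₀ ht, neg_smul, div_eq_inv_mul]
    abel
  · rintro rfl
    rw [smul_add, smul_inv_smul₀ ht, smul_smul, mul_neg, mul_div_cancel₀ _ ht, neg_smul]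
    abel

lemma forall_smul_add_smul_comp_neg_iff [Module ℝ E] {lam : ℝ} {a b : ℤ → E} :
    (∀ z, lam • b (z - 1) + (1 - lam) • b z = a z) ↔
      ∀ z, (1 - lam) • b (-(z - 1)) + (1 - (1 - lam)) • b (-z) = a (1 - z) := by
  refine ⟨fun h z => ?_, fun h z => ?_⟩
  · rw [sub_sub_cancel, add_comm, ← h (1 - z), sub_sub_cancel_left, neg_sub]
  · simpa only [sub_sub_cancel, sub_sub_cancel_left, neg_neg, neg_sub, add_comm] using h (1 - z)

end Recurrence

section Solution

variable {d : ℕ} {r : ℝ} {a c : ℤ → EuclideanSpace ℝ (Fin d)}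

lemma isSubexponential_comp_neg_iff : IsSubexponential (fun z => c (-z)) ↔ IsSubexponential c :=
  ⟨fun h => by simpa using h.comp_sub_left 0, fun h => by simpa using h.comp_sub_left 0⟩

lemma IsSubexponential.summable_pow_mul_norm (hc : IsSubexponential c) (hr : |r| < 1) (z : ℤ) :
    Summable fun k : ℕ => |r| ^ k * ‖c (z - k)‖ := by
  obtain ⟨ε, hε, hrε⟩ := exists_pos_mul_exp_lt_one hr
  obtain ⟨C, hC⟩ := hc.exists_bound hε
  exact (summable_and_tsum_le_of_exp_bound (abs_nonneg r) hε.le hrε hC z).1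

lemma IsSubexponential.summable_pow_smul (hc : IsSubexponential c) (hr : |r| < 1) (z : ℤ) :
    Summable fun k : ℕ => r ^ k • c (z - k) :=
  .of_norm <| by simpa only [norm_pow_smul] using hc.summable_pow_mul_norm hr z

lemma isSubexponential_geomConv (ha : IsSubexponential a) (hr : |r| < 1) :
    IsSubexponential (geomConv r a) := by
  obtain ⟨ε₀, hε₀, hrε₀⟩ := exists_pos_mul_exp_lt_one hr
  refine isSubexponential_iff_isBigO.2 fun ε hε => ?_
  set ε' := min ε ε₀
  obtain ⟨C, hC⟩ := ha.exists_bound (lt_min hε hε₀)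
  have hC0 : 0 ≤ C := by simpa using (norm_nonneg _).trans (hC 0)
  have hrε' : |r| * exp ε' < 1 :=
    (mul_le_mul_of_nonneg_left (exp_le_exp.2 (min_le_right _ _)) (abs_nonneg r)).trans_lt hrε₀
  refine IsBigO.of_bound (C / (1 - |r| * exp ε')) (Eventually.of_forall fun z => ?_)
  obtain ⟨hsum, hle⟩ :=
    summable_and_tsum_le_of_exp_bound (abs_nonneg r) (lt_min hε hε₀).le hrε' hC z
  calc ‖geomConv r a z‖ ≤ ∑' k : ℕ, ‖r ^ k • a (z - k)‖ :=
        norm_tsum_le_tsum_norm (by simpa only [norm_pow_smul] using hsum)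
    _ = ∑' k : ℕ, |r| ^ k * ‖a (z - k)‖ := by simp only [norm_pow_smul]
    _ ≤ C * exp (ε' * |(z : ℝ)|) / (1 - |r| * exp ε') := hle
    _ ≤ C * exp (ε * |(z : ℝ)|) / (1 - |r| * exp ε') := by
        gcongr
        exact min_le_left _ _
    _ = C / (1 - |r| * exp ε') * ‖exp (ε * |(z : ℝ)|)‖ := by
        rw [norm_of_nonneg (exp_pos _).le, div_mul_eq_mul_div]

lemma IsSubexponential.eq_zero_of_eq_smul (hc : IsSubexponential c) (hr : |r| < 1)
    (h : ∀ z, c z = r • c (z - 1)) : c = 0 := by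
  funext z
  have hiter (n : ℕ) : ‖c z‖ = |r| ^ n * ‖c (z - n)‖ := by
    induction n with
    | zero => simp
    | succ n ih =>
      rw [ih, h (z - n), norm_smul, Real.norm_eq_abs, pow_succ, Nat.cast_succ, sub_sub, mul_assoc]
  have hlim := (hc.summable_pow_mul_norm hr z).tendsto_atTop_zero
  simp only [← hiter] at hlim
  exact norm_eq_zero.1 (tendsto_nhds_unique tendsto_const_nhds hlim)

theorem existsUnique_isSubexponential_eq_add_smul (ha : IsSubexponential a) (hr : |r| < 1) :
    ∃! x, IsSubexponential x ∧ ∀ z, x z = a z + r • x (z - 1) := by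
  have hrec (z : ℤ) := geomConv_eq_add_smul (ha.summable_pow_smul hr (z - 1))
  refine ⟨geomConv r a, ⟨isSubexponential_geomConv ha hr, hrec⟩, fun x ⟨hx, hxrec⟩ => ?_⟩
  refine sub_eq_zero.1
    ((hx.sub (isSubexponential_geomConv ha hr)).eq_zero_of_eq_smul hr fun z => ?_)
  rw [Pi.sub_apply, Pi.sub_apply, hxrec, hrec, smul_sub]
  abel

theorem existsUnique_of_lt_half {lam : ℝ} (hlam : lam < 1 / 2) (ha : IsSubexponential a) :
    ∃! b, IsSubexponential b ∧ ∀ z, lam • b (z - 1) + (1 - lam) • b z = a z := by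
  have hpos : 0 < 1 - lam := by linarith
  have hr : |-(lam / (1 - lam))| < 1 := by
    rw [abs_neg, abs_div, abs_of_pos hpos, div_lt_one hpos, abs_lt]
    constructor <;> linarith
  simpa only [smul_add_smul_eq_iff hpos.ne', Pi.smul_apply] using
    existsUnique_isSubexponential_eq_add_smul (ha.const_smul (1 - lam)⁻¹) hr

end Solution

theorem stmt_9_general (d : ℕ) (lam : ℝ) (hhalf : lam ≠ 1 / 2) :
    ∀ a : ℤ → EuclideanSpace ℝ (Fin d), IsSubexponential a →
      ∃! b : ℤ → EuclideanSpace ℝ (Fin d),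
        IsSubexponential b ∧ ∀ z : ℤ, lam • b (z - 1) + (1 - lam) • b z = a z := by
  intro a ha
  rcases hhalf.lt_or_gt with hlt | hgt
  · exact existsUnique_of_lt_half hlt ha
  · refine (((Equiv.neg ℤ).arrowCongr (Equiv.refl _)).existsUnique_congr fun b => ?_).2
      (existsUnique_of_lt_half (by linarith : 1 - lam < 1 / 2) (ha.comp_sub_left 1))
    exact and_congr isSubexponential_comp_neg_iff.symm forall_smul_add_smul_comp_neg_iff

/-- For `λ ∈ (0,1)`, `λ ≠ 1/2`, every subexponential sequence `(a_z)` admits exactly one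
subexponential sequence `(b_z)` with `λ b_{z−1} + (1−λ) b_z = a_z` for all `z`. -/
theorem stmt_9 (d : ℕ) (hd : 1 ≤ d) (lam : ℝ)
    (h0 : 0 < lam) (h1 : lam < 1) (hhalf : lam ≠ 1 / 2) :
    ∀ a : ℤ → EuclideanSpace ℝ (Fin d), IsSubexponential a →
      ∃! b : ℤ → EuclideanSpace ℝ (Fin d),
        IsSubexponential b ∧ ∀ z : ℤ, lam • b (z - 1) + (1 - lam) • b z = a z :=
  stmt_9_general d lam hhalf
end
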